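/- arXiv:2605.04571 — 11 statements merged into one kernel-verified Lean document; each statement's English description precedes it below -/
import Mathlib

section
/- Let s1, s2, τ1, τ2, τ3 be real numbers with |τ1| ≤ 1. Then the 4×4 complex matrix M := I⊗I + s1·(σ1⊗I) + s2·(I⊗σ1) + τ1·(σ1⊗σ1) + τ2·(σ2⊗σ2) + τ3·(σ3⊗σ3) is positive semidefinite if and only if the following four conditions hold: 1 + τ1 + s1 + s2 ≥ 0; 1 − τ1 − s1 + s2 ≥ 0; (1 − τ1)² ≥ (s1 − s2)² + (τ2 + τ3)²; and (1 + τ1)² ≥ (s1 + s2)² + (τ2 − τ3)². -/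
open Matrix Kronecker ComplexOrder

noncomputable def σ1 : Matrix (Fin 2) (Fin 2) ℂ := !![0, 1; 1, 0]
noncomputable def σ2 : Matrix (Fin 2) (Fin 2) ℂ := !![0, -Complex.I; Complex.I, 0]
noncomputable def σ3 : Matrix (Fin 2) (Fin 2) ℂ := !![1, 0; 0, -1]

/-!
The matrix commutes with the swap of the two tensor factors, and in the basis
`|00⟩ ± |11⟩, |01⟩ ± |10⟩` it is block diagonal with the two real symmetric blocks
`!![1 + τ1 - τ2 + τ3, s1 + s2; s1 + s2, 1 + τ1 + τ2 - τ3]` (on the symmetric vectors) and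
`!![1 - τ1 + τ2 + τ3, s2 - s1; s2 - s1, 1 - τ1 - τ2 - τ3]` (on the antisymmetric ones).
A real symmetric `2 × 2` matrix is positive semidefinite iff its diagonal entries and its
determinant are nonnegative. The determinants are `(1 ± τ1)² - (s1 ± s2)² - (τ2 ∓ τ3)²`, and
under `|τ1| ≤ 1` the conditions on the diagonals amount to the two linear inequalities.
-/

open ComplexConjugate

lemma quadratic_form_nonneg {α β γ : ℝ} (hα : 0 ≤ α) (hγ : 0 ≤ γ) (hβ : β ^ 2 ≤ α * γ)
    (x y : ℝ) : 0 ≤ α * x ^ 2 + 2 * β * x * y + γ * y ^ 2 := by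
  rcases hα.eq_or_lt with rfl | hα
  · have : β = 0 := by nlinarith [sq_nonneg β]
    subst this
    nlinarith [mul_nonneg hγ (sq_nonneg y)]
  · refine nonneg_of_mul_nonneg_right ?_ hα
    nlinarith [sq_nonneg (α * x + β * y), mul_nonneg (sub_nonneg.2 hβ) (sq_nonneg y)]

/-- The Hermitian form of the real symmetric matrix `!![α, β; β, γ]`. -/
noncomputable def binaryForm (α β γ : ℝ) (z w : ℂ) : ℝ :=
  α * Complex.normSq z + 2 * β * (z * conj w).re + γ * Complex.normSq w

lemma binaryForm_eq (α β γ : ℝ) (z w : ℂ) :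
    binaryForm α β γ z w = (α * z.re ^ 2 + 2 * β * z.re * w.re + γ * w.re ^ 2)
      + (α * z.im ^ 2 + 2 * β * z.im * w.im + γ * w.im ^ 2) := by
  simp only [binaryForm, Complex.normSq_apply, Complex.mul_re, Complex.conj_re, Complex.conj_im]
  ring

lemma binaryForm_nonneg_iff {α β γ : ℝ} :
    (∀ z w, 0 ≤ binaryForm α β γ z w) ↔ 0 ≤ α ∧ 0 ≤ γ ∧ β ^ 2 ≤ α * γ := by
  refine ⟨fun h => ⟨by simpa [binaryForm] using h 1 0, by simpa [binaryForm] using h 0 1, ?_⟩,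
    fun ⟨hα, hγ, hβ⟩ z w => ?_⟩
  · have := discrim_le_zero (a := α) (b := 2 * β) (c := γ) fun x => by
      simpa [binaryForm, mul_assoc] using h x 1
    rw [discrim] at this
    linarith
  · rw [binaryForm_eq]
    exact add_nonneg (quadratic_form_nonneg hα hγ hβ _ _) (quadratic_form_nonneg hα hγ hβ _ _)

lemma Matrix.IsHermitian.kronecker {R m n : Type*} [CommSemiring R] [StarRing R]
    {A : Matrix m m R} {B : Matrix n n R} (hA : A.IsHermitian) (hB : B.IsHermitian) :
    (A ⊗ₖ B).IsHermitian := by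
  rw [IsHermitian, conjTranspose_kronecker, hA.eq, hB.eq]

lemma isHermitian_σ1 : σ1.IsHermitian := by
  ext i j; fin_cases i <;> fin_cases j <;> simp [σ1]

lemma isHermitian_σ2 : σ2.IsHermitian := by
  ext i j; fin_cases i <;> fin_cases j <;> simp [σ2]

lemma isHermitian_σ3 : σ3.IsHermitian := by
  ext i j; fin_cases i <;> fin_cases j <;> simp [σ3]

section TwoQubit

variable (s1 s2 τ1 τ2 τ3 : ℝ)

noncomputable def twoQubitMatrix : Matrix (Fin 2 × Fin 2) (Fin 2 × Fin 2) ℂ :=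
  ((1 : Matrix (Fin 2) (Fin 2) ℂ) ⊗ₖ (1 : Matrix (Fin 2) (Fin 2) ℂ))
      + (s1 : ℂ) • (σ1 ⊗ₖ (1 : Matrix (Fin 2) (Fin 2) ℂ))
      + (s2 : ℂ) • ((1 : Matrix (Fin 2) (Fin 2) ℂ) ⊗ₖ σ1)
      + (τ1 : ℂ) • (σ1 ⊗ₖ σ1)
      + (τ2 : ℂ) • (σ2 ⊗ₖ σ2)
      + (τ3 : ℂ) • (σ3 ⊗ₖ σ3)

lemma isHermitian_twoQubitMatrix : (twoQubitMatrix s1 s2 τ1 τ2 τ3).IsHermitian := by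
  have h1 : (1 : Matrix (Fin 2) (Fin 2) ℂ).IsHermitian := isHermitian_one
  have hr (r : ℝ) : IsSelfAdjoint (r : ℂ) := Complex.conj_ofReal r
  exact (((((h1.kronecker h1).add ((isHermitian_σ1.kronecker h1).smul (hr s1))).add
    ((h1.kronecker isHermitian_σ1).smul (hr s2))).add
    ((isHermitian_σ1.kronecker isHermitian_σ1).smul (hr τ1))).add
    ((isHermitian_σ2.kronecker isHermitian_σ2).smul (hr τ2))).add
    ((isHermitian_σ3.kronecker isHermitian_σ3).smul (hr τ3))

lemma two_mul_star_dotProduct_twoQubitMatrix_mulVec (x : Fin 2 × Fin 2 → ℂ) :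
    2 * (star x ⬝ᵥ (twoQubitMatrix s1 s2 τ1 τ2 τ3 *ᵥ x)) =
      ((binaryForm (1 + τ1 - τ2 + τ3) (s1 + s2) (1 + τ1 + τ2 - τ3)
          (x (0, 0) + x (1, 1)) (x (0, 1) + x (1, 0))
        + binaryForm (1 - τ1 + τ2 + τ3) (s2 - s1) (1 - τ1 - τ2 - τ3)
          (x (0, 0) - x (1, 1)) (x (0, 1) - x (1, 0)) : ℝ) : ℂ) := by
  simp only [twoQubitMatrix, dotProduct, mulVec, Fintype.sum_prod_type, Fin.sum_univ_two,
    Matrix.add_apply, Matrix.smul_apply, Matrix.kroneckerMap_apply, Matrix.one_apply, σ1, σ2, σ3,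
    Pi.star_apply, smul_eq_mul, Complex.ext_iff]
  constructor <;> simp [binaryForm, Complex.normSq_apply] <;> ring

lemma star_dotProduct_twoQubitMatrix_mulVec_nonneg_iff (x : Fin 2 × Fin 2 → ℂ) :
    0 ≤ star x ⬝ᵥ (twoQubitMatrix s1 s2 τ1 τ2 τ3 *ᵥ x) ↔
      0 ≤ binaryForm (1 + τ1 - τ2 + τ3) (s1 + s2) (1 + τ1 + τ2 - τ3)
          (x (0, 0) + x (1, 1)) (x (0, 1) + x (1, 0))
        + binaryForm (1 - τ1 + τ2 + τ3) (s2 - s1) (1 - τ1 - τ2 - τ3)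
          (x (0, 0) - x (1, 1)) (x (0, 1) - x (1, 0)) := by
  rw [← Complex.zero_le_real, ← two_mul_star_dotProduct_twoQubitMatrix_mulVec]
  simp [Complex.le_def, eq_comm]

lemma posSemidef_twoQubitMatrix_iff :
    (twoQubitMatrix s1 s2 τ1 τ2 τ3).PosSemidef ↔
      (∀ z w, 0 ≤ binaryForm (1 + τ1 - τ2 + τ3) (s1 + s2) (1 + τ1 + τ2 - τ3) z w) ∧
      (∀ z w, 0 ≤ binaryForm (1 - τ1 + τ2 + τ3) (s2 - s1) (1 - τ1 - τ2 - τ3) z w) := by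
  simp_rw [posSemidef_iff_dotProduct_mulVec, star_dotProduct_twoQubitMatrix_mulVec_nonneg_iff,
    and_iff_right (isHermitian_twoQubitMatrix s1 s2 τ1 τ2 τ3)]
  refine ⟨fun h => ⟨fun z w => ?_, fun z w => ?_⟩, fun ⟨hA, hB⟩ x => add_nonneg (hA _ _) (hB _ _)⟩
  · simpa [binaryForm] using h fun p => !![z / 2, w / 2; w / 2, z / 2] p.1 p.2
  · simpa [binaryForm] using h fun p => !![z / 2, w / 2; -(w / 2), -(z / 2)] p.1 p.2

end TwoQubit

/-- the matrix `I⊗I + s1·(σ1⊗I) + s2·(I⊗σ1) + τ1·(σ1⊗σ1) + τ2·(σ2⊗σ2) + τ3·(σ3⊗σ3)`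
is positive semidefinite iff the four stated inequalities hold. -/
theorem stmt0 (s1 s2 τ1 τ2 τ3 : ℝ) (hτ1 : |τ1| ≤ 1) :
    (((1 : Matrix (Fin 2) (Fin 2) ℂ) ⊗ₖ (1 : Matrix (Fin 2) (Fin 2) ℂ))
      + (s1 : ℂ) • (σ1 ⊗ₖ (1 : Matrix (Fin 2) (Fin 2) ℂ))
      + (s2 : ℂ) • ((1 : Matrix (Fin 2) (Fin 2) ℂ) ⊗ₖ σ1)
      + (τ1 : ℂ) • (σ1 ⊗ₖ σ1)
      + (τ2 : ℂ) • (σ2 ⊗ₖ σ2)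
      + (τ3 : ℂ) • (σ3 ⊗ₖ σ3)).PosSemidef
    ↔ (0 ≤ 1 + τ1 + s1 + s2 ∧ 0 ≤ 1 - τ1 - s1 + s2 ∧
        (s1 - s2) ^ 2 + (τ2 + τ3) ^ 2 ≤ (1 - τ1) ^ 2 ∧
        (s1 + s2) ^ 2 + (τ2 - τ3) ^ 2 ≤ (1 + τ1) ^ 2) := by
  rw [← twoQubitMatrix, posSemidef_twoQubitMatrix_iff, binaryForm_nonneg_iff,
    binaryForm_nonneg_iff]
  obtain ⟨hτ1_lower, hτ1_upper⟩ := abs_le.mp hτ1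
  constructor
  · rintro ⟨⟨hαA, hγA, hβA⟩, hαB, hγB, hβB⟩
    refine ⟨?_, ?_, by nlinarith, by nlinarith⟩
    · nlinarith [sq_nonneg (1 + τ1 + s1 + s2), sq_nonneg (τ2 - τ3)]
    · nlinarith [sq_nonneg (1 - τ1 - s1 + s2), sq_nonneg (τ2 + τ3)]
  · rintro ⟨-, -, hB, hA⟩
    refine ⟨⟨?_, ?_, by nlinarith⟩, ?_, ?_, by nlinarith⟩
    all_goals nlinarith [sq_nonneg (s1 + s2), sq_nonneg (s1 - s2)]
end

section
/- Let c be a real number and λ1, λ2 > 0 real numbers. Then the 4×4 complex matrix I⊗I + c·(I⊗σ1) − λ1·(σ2⊗σ2) + λ2·(σ3⊗σ3) is positive semidefinite if and only if (λ1 + λ2)² + c² ≤ 1. -/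
/-!
In the basis of (unnormalised) Bell vectors the matrix is block diagonal: on the span of
`e₀₀ + e₁₁, e₀₁ + e₁₀` it acts as `I + (λ₁ + λ₂) σ₃ + c σ₁`, and on the span of
`e₀₀ - e₁₁, e₀₁ - e₁₀` as `I + (λ₂ - λ₁) σ₃ + c σ₁`. A real qubit matrix `I + a σ₃ + c σ₁` is
positive semidefinite iff `a² + c² ≤ 1`, and since `λ₁ λ₂ > 0` the condition on the second block
follows from the one on the first.
-/

open Matrix Kronecker ComplexOrder

namespace Matrix

variable {m o R : Type*} [DecidableEq o]

theorem star_dotProduct_blockDiagonal_mulVec [Fintype m] [Fintype o] [NonUnitalSemiring R]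
    [StarRing R] (M : o → Matrix m m R) (x : m × o → R) :
    star x ⬝ᵥ (blockDiagonal M *ᵥ x) =
      ∑ k, star (fun i => x (i, k)) ⬝ᵥ (M k *ᵥ fun i => x (i, k)) := by
  simp only [dotProduct, mulVec, Fintype.sum_prod_type, blockDiagonal_apply, ite_mul, zero_mul,
    Finset.sum_ite_eq, Finset.mem_univ, if_true]
  exact Finset.sum_comm

theorem submatrix_blockDiagonal_self [Zero R] (M : o → Matrix m m R) (k : o) :
    (blockDiagonal M).submatrix (·, k) (·, k) = M k := by
  ext
  simp

theorem posSemidef_blockDiagonal_iff [Fintype m] [Fintype o] [Ring R] [PartialOrder R]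
    [StarRing R] [AddLeftMono R] {M : o → Matrix m m R} :
    (blockDiagonal M).PosSemidef ↔ ∀ k, (M k).PosSemidef := by
  refine ⟨fun h k => submatrix_blockDiagonal_self M k ▸ h.submatrix (·, k), fun h => ?_⟩
  refine .of_dotProduct_mulVec_nonneg
    (isHermitian_blockDiagonal_iff.2 fun k => (h k).isHermitian) fun x => ?_
  rw [star_dotProduct_blockDiagonal_mulVec]
  exact Finset.sum_nonneg fun k _ => (h k).dotProduct_mulVec_nonneg _

end Matrix

/-- The density matrix `(I + a σ₃ + c σ₁) / 2` with real Bloch vector `(c, 0, a)`. -/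
noncomputable def blochMatrix (a c : ℝ) : Matrix (Fin 2) (Fin 2) ℂ :=
  !![(1 + a) / 2, c / 2; c / 2, (1 - a) / 2]

lemma blochMatrix_isHermitian (a c : ℝ) : (blochMatrix a c).IsHermitian := by
  ext i j
  fin_cases i <;> fin_cases j <;> simp [blochMatrix, Complex.conj_ofReal]

lemma star_dotProduct_blochMatrix_mulVec (a c : ℝ) (x : Fin 2 → ℂ) :
    star x ⬝ᵥ (blochMatrix a c *ᵥ x) =
      (((1 + a) * Complex.normSq (x 0) + (1 - a) * Complex.normSq (x 1)
        + 2 * c * (star (x 0) * x 1).re) / 2 : ℝ) := by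
  apply Complex.ext <;>
    simp [blochMatrix, dotProduct, mulVec, Fin.sum_univ_two, Complex.normSq_apply] <;> ring

lemma blochMatrix_posSemidef_iff (a c : ℝ) :
    (blochMatrix a c).PosSemidef ↔ a ^ 2 + c ^ 2 ≤ 1 := by
  simp only [posSemidef_iff_dotProduct_mulVec, blochMatrix_isHermitian, true_and,
    star_dotProduct_blochMatrix_mulVec, Complex.zero_le_real]
  constructor
  · intro h
    -- these test vectors give the values `(1 ± a) (1 - a² - c²) / 2`
    have hplus := h ![-c, 1 + a]
    have hminus := h ![1 - a, -c]
    simp only [cons_val_zero, cons_val_one, cons_val_fin_one, Complex.normSq_apply, star_neg,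
      RCLike.star_def, Complex.conj_re, Complex.conj_im, Complex.mul_re, Complex.neg_re,
      Complex.neg_im, Complex.add_re, Complex.add_im, Complex.sub_re, Complex.sub_im,
      Complex.one_re, Complex.one_im, Complex.ofReal_re, Complex.ofReal_im] at hplus hminus
    nlinarith
  · intro h x
    have sum_of_squares : 2 * ((1 + a) * Complex.normSq (x 0) + (1 - a) * Complex.normSq (x 1)
        + 2 * c * (star (x 0) * x 1).re) = Complex.normSq ((1 + a) * x 0 + c * x 1)
        + Complex.normSq ((1 - a) * x 1 + c * x 0)
        + (1 - a ^ 2 - c ^ 2) * (Complex.normSq (x 0) + Complex.normSq (x 1)) := by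
      simp only [Complex.normSq_apply, RCLike.star_def, Complex.mul_re, Complex.mul_im,
        Complex.conj_re, Complex.conj_im, Complex.add_re, Complex.add_im, Complex.sub_re,
        Complex.sub_im, Complex.one_re, Complex.one_im, Complex.ofReal_re, Complex.ofReal_im]
      ring
    have hdet : 0 ≤ 1 - a ^ 2 - c ^ 2 := by linarith
    linarith [Complex.normSq_nonneg ((1 + a) * x 0 + c * x 1),
      Complex.normSq_nonneg ((1 - a) * x 1 + c * x 0),
      mul_nonneg hdet (add_nonneg (Complex.normSq_nonneg (x 0)) (Complex.normSq_nonneg (x 1)))]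

/-- Row `(i, k)` is the unnormalised Bell vector `e (0, i) + (-1) ^ k e (1, i + 1)`. -/
def bellMatrix : Matrix (Fin 2 × Fin 2) (Fin 2 × Fin 2) ℂ :=
  of fun p q => if q.1 + q.2 = p.1 then (if p.2 = 0 ∨ q.1 = 0 then 1 else -1) else 0

lemma bellMatrix_mul_star : bellMatrix * star bellMatrix = (2 : ℂ) • 1 := by
  ext ⟨i, k⟩ ⟨j, l⟩
  fin_cases i <;> fin_cases k <;> fin_cases j <;> fin_cases l <;>
    simp [bellMatrix, mul_apply, Fintype.sum_prod_type, Fin.sum_univ_two, one_apply] <;> norm_num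

lemma isUnit_bellMatrix : IsUnit bellMatrix :=
  .of_mul_eq_one ((2⁻¹ : ℂ) • star bellMatrix) <| by
    rw [mul_smul_comm, bellMatrix_mul_star, smul_smul]
    norm_num

lemma pauliSum_eq_bell_conj_blockDiagonal (c lam1 lam2 : ℝ) :
    ((1 : Matrix (Fin 2) (Fin 2) ℂ) ⊗ₖ (1 : Matrix (Fin 2) (Fin 2) ℂ))
      + (c : ℂ) • ((1 : Matrix (Fin 2) (Fin 2) ℂ) ⊗ₖ σ1)
      - (lam1 : ℂ) • (σ2 ⊗ₖ σ2)
      + (lam2 : ℂ) • (σ3 ⊗ₖ σ3) =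
    star bellMatrix *
      blockDiagonal ![blochMatrix (lam1 + lam2) c, blochMatrix (lam2 - lam1) c] * bellMatrix := by
  ext ⟨i, k⟩ ⟨j, l⟩
  fin_cases i <;> fin_cases k <;> fin_cases j <;> fin_cases l <;>
    simp [bellMatrix, blochMatrix, σ1, σ2, σ3, mul_apply, Fintype.sum_prod_type,
      Fin.sum_univ_two, one_apply, blockDiagonal_apply] <;> ring

/-- for c real and lam1, lam2 > 0, the matrix
`I⊗I + c·(I⊗σ1) − lam1·(σ2⊗σ2) + lam2·(σ3⊗σ3)` is PSD iff (lam1+lam2)² + c² ≤ 1. -/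
theorem stmt3 (c lam1 lam2 : ℝ) (h1 : 0 < lam1) (h2 : 0 < lam2) :
    (((1 : Matrix (Fin 2) (Fin 2) ℂ) ⊗ₖ (1 : Matrix (Fin 2) (Fin 2) ℂ))
      + (c : ℂ) • ((1 : Matrix (Fin 2) (Fin 2) ℂ) ⊗ₖ σ1)
      - (lam1 : ℂ) • (σ2 ⊗ₖ σ2)
      + (lam2 : ℂ) • (σ3 ⊗ₖ σ3)).PosSemidef
    ↔ (lam1 + lam2) ^ 2 + c ^ 2 ≤ 1 := by
  rw [pauliSum_eq_bell_conj_blockDiagonal, isUnit_bellMatrix.posSemidef_star_left_conjugate_iff,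
    posSemidef_blockDiagonal_iff, Fin.forall_fin_two]
  simp only [cons_val_zero, cons_val_one, blochMatrix_posSemidef_iff]
  have hsq : (lam2 - lam1) ^ 2 ≤ (lam1 + lam2) ^ 2 := by nlinarith [mul_pos h1 h2]
  exact ⟨And.left, fun h => ⟨h, by linarith⟩⟩
end

section
/- Let c1, c2, λ be real numbers. Then the 4×4 complex matrix I⊗I + c1·(I⊗σ1) + c2·(I⊗σ2) + λ·(σ3⊗σ3) is positive semidefinite if and only if λ² + c1² + c2² ≤ 1. -/
open Matrix Kronecker ComplexOrder

/-! The matrix is block diagonal with respect to the first tensor factor, the blocks being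
`I + c1 σ1 + c2 σ2 ± λ σ3`. A Hermitian `2 × 2` matrix is positive semidefinite iff its trace and
determinant are nonnegative (its two eigenvalues have nonnegative sum and product), and for
`I + x σ1 + y σ2 + z σ3` these are `2` and `1 - x² - y² - z²`. -/

namespace Matrix

variable {𝕜 : Type*} [RCLike 𝕜]

theorem IsHermitian.posSemidef_iff_trace_nonneg_and_det_nonneg {A : Matrix (Fin 2) (Fin 2) 𝕜}
    (hA : A.IsHermitian) : A.PosSemidef ↔ 0 ≤ A.trace ∧ 0 ≤ A.det := by
  refine ⟨fun h ↦ ⟨h.trace_nonneg, h.det_nonneg⟩, fun ⟨htr, hdet⟩ ↦ ?_⟩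
  rw [hA.trace_eq_sum_eigenvalues, Fin.sum_univ_two, ← RCLike.ofReal_add,
    RCLike.ofReal_nonneg] at htr
  rw [hA.det_eq_prod_eigenvalues, Fin.prod_univ_two, ← RCLike.ofReal_mul,
    RCLike.ofReal_nonneg] at hdet
  rw [hA.posSemidef_iff_eigenvalues_nonneg, Pi.le_def, Fin.forall_fin_two]
  simp only [Pi.zero_apply]
  constructor <;> nlinarith

variable {m n : Type*} [Fintype m] [DecidableEq m] [Fintype n]

theorem posSemidef_sum_single_kronecker_iff (A : m → Matrix n n 𝕜) :
    (∑ i, single i i (1 : 𝕜) ⊗ₖ A i).PosSemidef ↔ ∀ i, (A i).PosSemidef := by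
  refine ⟨fun h i ↦ ?_, fun h ↦ posSemidef_sum _ fun i _ ↦ ?_⟩
  · convert h.submatrix (Prod.mk i)
    ext a b
    simp [sum_apply, single_apply]
  · rw [← diagonal_single]
    exact (PosSemidef.diagonal (Pi.single_nonneg.mpr zero_le_one)).kronecker (h i)

end Matrix

theorem one_add_pauli_eq (x y z : ℝ) :
    1 + (x : ℂ) • σ1 + (y : ℂ) • σ2 + (z : ℂ) • σ3
      = !![1 + (z : ℂ), x - y * Complex.I; x + y * Complex.I, 1 - z] := by
  ext i j
  fin_cases i <;> fin_cases j <;> simp [σ1, σ2, σ3, sub_eq_add_neg]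

theorem posSemidef_one_add_pauli_iff (x y z : ℝ) :
    (1 + (x : ℂ) • σ1 + (y : ℂ) • σ2 + (z : ℂ) • σ3).PosSemidef ↔ x ^ 2 + y ^ 2 + z ^ 2 ≤ 1 := by
  have hA : (1 + (x : ℂ) • σ1 + (y : ℂ) • σ2 + (z : ℂ) • σ3).IsHermitian := by
    rw [one_add_pauli_eq]
    ext i j
    fin_cases i <;> fin_cases j <;> simp [Complex.ext_iff]
  rw [hA.posSemidef_iff_trace_nonneg_and_det_nonneg, one_add_pauli_eq, trace_fin_two_of,
    det_fin_two_of]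
  have htrace : (1 + z : ℂ) + (1 - z) = ((2 : ℝ) : ℂ) := by push_cast; ring
  have hdet : (1 + z : ℂ) * (1 - z) - (x - y * Complex.I) * (x + y * Complex.I)
      = ((1 - (x ^ 2 + y ^ 2 + z ^ 2) : ℝ) : ℂ) := by
    push_cast
    ring_nf
    rw [Complex.I_sq]
    ring
  rw [htrace, hdet, Complex.zero_le_real, Complex.zero_le_real, sub_nonneg]
  exact and_iff_right zero_le_two

/-- for c1, c2, λ real, the matrix
`I⊗I + c1·(I⊗σ1) + c2·(I⊗σ2) + λ·(σ3⊗σ3)` is PSD iff λ² + c1² + c2² ≤ 1. -/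
theorem stmt4 (c1 c2 lam : ℝ) :
    (((1 : Matrix (Fin 2) (Fin 2) ℂ) ⊗ₖ (1 : Matrix (Fin 2) (Fin 2) ℂ))
      + (c1 : ℂ) • ((1 : Matrix (Fin 2) (Fin 2) ℂ) ⊗ₖ σ1)
      + (c2 : ℂ) • ((1 : Matrix (Fin 2) (Fin 2) ℂ) ⊗ₖ σ2)
      + (lam : ℂ) • (σ3 ⊗ₖ σ3)).PosSemidef
    ↔ lam ^ 2 + c1 ^ 2 + c2 ^ 2 ≤ 1 := by
  have hblocks : ((1 : Matrix (Fin 2) (Fin 2) ℂ) ⊗ₖ (1 : Matrix (Fin 2) (Fin 2) ℂ))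
      + (c1 : ℂ) • ((1 : Matrix (Fin 2) (Fin 2) ℂ) ⊗ₖ σ1)
      + (c2 : ℂ) • ((1 : Matrix (Fin 2) (Fin 2) ℂ) ⊗ₖ σ2)
      + (lam : ℂ) • (σ3 ⊗ₖ σ3)
      = ∑ i, single i i (1 : ℂ) ⊗ₖ (1 + (c1 : ℂ) • σ1 + (c2 : ℂ) • σ2
          + ((![lam, -lam] i : ℝ) : ℂ) • σ3) := by
    ext ⟨a, b⟩ ⟨c, d⟩
    fin_cases a <;> fin_cases b <;> fin_cases c <;> fin_cases d <;>
      simp [σ1, σ2, σ3, Fin.sum_univ_two]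
  rw [hblocks, posSemidef_sum_single_kronecker_iff, Fin.forall_fin_two]
  simp only [posSemidef_one_add_pauli_iff, cons_val_zero, cons_val_one, neg_sq, and_self]
  rw [add_rotate (lam ^ 2)]
end

section
/- Let a, b ∈ [−1, 1] and λ1, λ2 > 0 be real numbers. Then the 4×4 complex matrix (I + a·σ1) ⊗ (I + b·σ1) + λ1·(σ2⊗σ2) + λ2·(σ3⊗σ3) is positive semidefinite if and only if (1 − a²)(1 − b²) ≥ (λ1 + λ2)². -/
/-!
The matrix commutes with `σ1 ⊗ σ1`, so it splits along the `±1` eigenspaces of `σ1 ⊗ σ1`,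
spanned by `e₀₀ ± e₁₁` and `e₀₁ ± e₁₀`, into two real symmetric `2 × 2` blocks. Such a block is
positive semidefinite iff its trace and determinant are nonnegative. The traces are `2 (1 ± a b)`,
nonnegative since `|a|, |b| ≤ 1`, and the determinants are `(1 - a²)(1 - b²) - (λ₁ ∓ λ₂)²`;
as `λ₁ λ₂ > 0`, the condition with `(λ₁ + λ₂)²` is the binding one.
-/

open Matrix Kronecker ComplexOrder

theorem quadratic_form_nonneg_s5 {α β γ : ℝ} (htr : 0 ≤ α + γ) (hdet : β ^ 2 ≤ α * γ) (p q : ℝ) :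
    0 ≤ α * p ^ 2 + 2 * β * p * q + γ * q ^ 2 := by
  have key : (α + γ) * (α * p ^ 2 + 2 * β * p * q + γ * q ^ 2) =
      (α * p + β * q) ^ 2 + (β * p + γ * q) ^ 2 + (α * γ - β ^ 2) * (p ^ 2 + q ^ 2) := by ring
  rcases htr.eq_or_lt with htr | htr
  · have hα : α = 0 := by nlinarith [sq_nonneg β]
    have hβ : β = 0 := by nlinarith [sq_nonneg β]
    simp [hα, hβ, show γ = 0 by linarith]
  · refine nonneg_of_mul_nonneg_right ?_ htr
    rw [key]
    have := sub_nonneg.2 hdet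
    positivity

theorem isHermitian_fin_two_ofReal (α β γ : ℝ) : (!![(α : ℂ), β; β, γ]).IsHermitian := by
  ext i j
  fin_cases i <;> fin_cases j <;> simp

theorem posSemidef_fin_two_ofReal_iff {α β γ : ℝ} :
    (!![(α : ℂ), β; β, γ]).PosSemidef ↔ 0 ≤ α + γ ∧ β ^ 2 ≤ α * γ := by
  constructor
  · intro h
    have htr := h.trace_nonneg
    have hdet := h.det_nonneg
    simp only [trace_fin_two, det_fin_two, of_apply, cons_val', cons_val_zero, cons_val_one]
      at htr hdet
    norm_cast at htr hdet
    exact ⟨htr, by linarith⟩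
  · rintro ⟨htr, hdet⟩
    refine .of_dotProduct_mulVec_nonneg (isHermitian_fin_two_ofReal α β γ) fun x ↦ ?_
    rw [Complex.nonneg_iff]
    simp only [dotProduct, Pi.star_apply, RCLike.star_def, mulVec, of_apply, cons_val',
      cons_val_fin_one, Fin.sum_univ_two, Fin.isValue, cons_val_zero, cons_val_one, Complex.add_re,
      Complex.mul_re, Complex.conj_re, Complex.ofReal_re, Complex.ofReal_im, zero_mul, sub_zero,
      Complex.conj_im, Complex.add_im, Complex.mul_im, add_zero, neg_mul, sub_neg_eq_add]
    constructor
    · linarith [quadratic_form_nonneg_s5 htr hdet (x 0).re (x 1).re,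
        quadratic_form_nonneg_s5 htr hdet (x 0).im (x 1).im]
    · ring

section RCLike

variable {𝕜 m n k : Type*} [RCLike 𝕜] [Fintype m] [Fintype n] [Fintype k]

theorem posSemidef_iff_of_dotProduct_mulVec_eq {M : Matrix m m 𝕜} {S : Matrix n n 𝕜}
    {A : Matrix k k 𝕜} (hM : M.IsHermitian) (hS : S.IsHermitian) (hA : A.IsHermitian)
    {c : 𝕜} (hc : 0 < c) {s : (m → 𝕜) → n → 𝕜} {d : (m → 𝕜) → k → 𝕜}
    (hsd : ∀ u v, ∃ x, s x = u ∧ d x = v)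
    (hform : ∀ x, c * (star x ⬝ᵥ (M *ᵥ x)) =
      star (s x) ⬝ᵥ (S *ᵥ s x) + star (d x) ⬝ᵥ (A *ᵥ d x)) :
    M.PosSemidef ↔ S.PosSemidef ∧ A.PosSemidef := by
  have hscale : ∀ x, 0 ≤ c * (star x ⬝ᵥ (M *ᵥ x)) ↔ 0 ≤ star x ⬝ᵥ (M *ᵥ x) := fun x ↦ by
    refine ⟨fun h ↦ ?_, mul_nonneg hc.le⟩
    simpa only [inv_mul_cancel_left₀ hc.ne'] using mul_nonneg (inv_pos.2 hc).le h
  constructor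
  · intro hMpos
    have hform_nonneg x := (hscale x).2 (hMpos.dotProduct_mulVec_nonneg x)
    refine ⟨.of_dotProduct_mulVec_nonneg hS fun u ↦ ?_, .of_dotProduct_mulVec_nonneg hA fun v ↦ ?_⟩
    · obtain ⟨x, rfl, hx⟩ := hsd u 0
      simpa [hform, hx] using hform_nonneg x
    · obtain ⟨x, hx, rfl⟩ := hsd 0 v
      simpa [hform, hx] using hform_nonneg x
  · rintro ⟨hSpos, hApos⟩
    refine .of_dotProduct_mulVec_nonneg hM fun x ↦ (hscale x).1 ?_
    rw [hform]
    exact add_nonneg (hSpos.dotProduct_mulVec_nonneg _) (hApos.dotProduct_mulVec_nonneg _)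

end RCLike

noncomputable def pauliSum (a b l1 l2 : ℝ) : Matrix (Fin 2 × Fin 2) (Fin 2 × Fin 2) ℂ :=
  ((1 : Matrix (Fin 2) (Fin 2) ℂ) + (a : ℂ) • σ1) ⊗ₖ ((1 : Matrix (Fin 2) (Fin 2) ℂ) + (b : ℂ) • σ1)
    + (l1 : ℂ) • (σ2 ⊗ₖ σ2) + (l2 : ℂ) • (σ3 ⊗ₖ σ3)

theorem isHermitian_pauliSum (a b l1 l2 : ℝ) : (pauliSum a b l1 l2).IsHermitian := by
  ext ⟨i, i'⟩ ⟨j, j'⟩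
  fin_cases i <;> fin_cases i' <;> fin_cases j <;> fin_cases j' <;>
    simp [pauliSum, σ1, σ2, σ3, one_apply]

def evenPart (x : Fin 2 × Fin 2 → ℂ) : Fin 2 → ℂ := ![x (0, 0) + x (1, 1), x (0, 1) + x (1, 0)]

def oddPart (x : Fin 2 × Fin 2 → ℂ) : Fin 2 → ℂ := ![x (0, 0) - x (1, 1), x (0, 1) - x (1, 0)]

theorem exists_evenPart_oddPart_eq (u v : Fin 2 → ℂ) : ∃ x, evenPart x = u ∧ oddPart x = v := by
  refine ⟨fun p ↦ ![![u 0 + v 0, u 1 + v 1], ![u 1 - v 1, u 0 - v 0]] p.1 p.2 / 2, ?_, ?_⟩ <;>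
  · ext i
    fin_cases i <;>
      simp only [evenPart, oddPart, Fin.isValue, cons_val', cons_val_zero, cons_val_fin_one,
        cons_val_one, Fin.zero_eta, Fin.mk_one] <;>
      ring

theorem two_mul_dotProduct_pauliSum_mulVec (a b l1 l2 : ℝ) (x : Fin 2 × Fin 2 → ℂ) :
    2 * (star x ⬝ᵥ (pauliSum a b l1 l2 *ᵥ x)) =
      star (evenPart x) ⬝ᵥ (!![((1 + a * b + l2 - l1 : ℝ) : ℂ), ((a + b : ℝ) : ℂ);
        ((a + b : ℝ) : ℂ), ((1 + a * b + l1 - l2 : ℝ) : ℂ)] *ᵥ evenPart x) +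
      star (oddPart x) ⬝ᵥ (!![((1 - a * b + l1 + l2 : ℝ) : ℂ), ((b - a : ℝ) : ℂ);
        ((b - a : ℝ) : ℂ), ((1 - a * b - l1 - l2 : ℝ) : ℂ)] *ᵥ oddPart x) := by
  simp only [dotProduct, Pi.star_apply, RCLike.star_def, mulVec, pauliSum, σ1, smul_of, smul_cons,
    smul_eq_mul, mul_zero, mul_one, smul_empty, σ2, Complex.coe_smul, σ3, Matrix.add_apply,
    kroneckerMap_apply, one_apply, of_apply, cons_val', cons_val_fin_one, Matrix.smul_apply,
    Complex.real_smul, Fintype.sum_prod_type, Fin.sum_univ_two, Fin.isValue, cons_val_zero,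
    cons_val_one, ↓reduceIte, add_zero, zero_ne_one, zero_add, mul_neg, one_ne_zero, one_mul,
    zero_mul, neg_zero, neg_mul, Complex.I_mul_I, neg_neg, evenPart, Complex.ofReal_sub,
    Complex.ofReal_add, Complex.ofReal_one, Complex.ofReal_mul, map_add, oddPart, map_sub]
  ring

/-- for a, b ∈ [−1,1] and lam1, lam2 > 0, the matrix
`(I + a·σ1) ⊗ (I + b·σ1) + lam1·(σ2⊗σ2) + lam2·(σ3⊗σ3)` is PSD iff
(1 − a²)(1 − b²) ≥ (lam1 + lam2)². -/
theorem stmt5 (a b lam1 lam2 : ℝ) (ha : a ∈ Set.Icc (-1 : ℝ) 1) (hb : b ∈ Set.Icc (-1 : ℝ) 1)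
    (h1 : 0 < lam1) (h2 : 0 < lam2) :
    ((((1 : Matrix (Fin 2) (Fin 2) ℂ) + (a : ℂ) • σ1)
        ⊗ₖ ((1 : Matrix (Fin 2) (Fin 2) ℂ) + (b : ℂ) • σ1))
      + (lam1 : ℂ) • (σ2 ⊗ₖ σ2)
      + (lam2 : ℂ) • (σ3 ⊗ₖ σ3)).PosSemidef
    ↔ (lam1 + lam2) ^ 2 ≤ (1 - a ^ 2) * (1 - b ^ 2) := by
  rw [← pauliSum, posSemidef_iff_of_dotProduct_mulVec_eq
    (hform := two_mul_dotProduct_pauliSum_mulVec a b lam1 lam2) (isHermitian_pauliSum ..)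
    (isHermitian_fin_two_ofReal ..) (isHermitian_fin_two_ofReal ..) two_pos
    exists_evenPart_oddPart_eq,
    posSemidef_fin_two_ofReal_iff, posSemidef_fin_two_ofReal_iff]
  have hab : |a * b| ≤ 1 :=
    abs_mul a b ▸ mul_le_one₀ (abs_le.2 ha) (abs_nonneg b) (abs_le.2 hb)
  obtain ⟨hab1, hab2⟩ := abs_le.1 hab
  have even_det : (1 + a * b + lam2 - lam1) * (1 + a * b + lam1 - lam2) - (a + b) ^ 2 =
      (1 - a ^ 2) * (1 - b ^ 2) - (lam1 - lam2) ^ 2 := by ring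
  have odd_det : (1 - a * b + lam1 + lam2) * (1 - a * b - lam1 - lam2) - (b - a) ^ 2 =
      (1 - a ^ 2) * (1 - b ^ 2) - (lam1 + lam2) ^ 2 := by ring
  have hlam : (lam1 - lam2) ^ 2 ≤ (lam1 + lam2) ^ 2 := by nlinarith [mul_pos h1 h2]
  constructor
  · rintro ⟨-, -, hodd⟩
    linarith
  · intro h
    exact ⟨⟨by linarith, by linarith⟩, by linarith, by linarith⟩
end

section
/- Let a, b ∈ [−1, 1] and λ ∈ ℝ. Then the 4×4 complex matrix (I + a·σ1) ⊗ (I + b·σ1) + λ·(σ3⊗σ3) is positive semidefinite if and only if (1 − a²)(1 − b²) ≥ λ². -/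
open Matrix Kronecker ComplexOrder

/-!
Conjugating by `H ⊗ H`, with `H` the Hadamard matrix, exchanges `σ1` and `σ3`, so the matrix is
PSD iff `diag((1 ± a)(1 ± b)) + λ σ1 ⊗ σ1` is. The latter only couples the basis states
`|00⟩, |11⟩` and `|01⟩, |10⟩`, so it is the direct sum of the two real `2 × 2` blocks
`[[(1+a)(1+b), λ], [λ, (1-a)(1-b)]]` and `[[(1+a)(1-b), λ], [λ, (1-a)(1+b)]]`. Both have
nonnegative diagonal for `a, b ∈ [-1, 1]` and determinant `(1 - a²)(1 - b²) - λ²`.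
-/

theorem quadratic_nonneg_of_sq_le_mul {p q l : ℝ} (hp : 0 ≤ p) (hq : 0 ≤ q)
    (hl : l ^ 2 ≤ p * q) (u v : ℝ) : 0 ≤ p * u ^ 2 + 2 * l * u * v + q * v ^ 2 := by
  rcases hp.eq_or_lt with rfl | hp
  · obtain rfl : l = 0 := by nlinarith [sq_nonneg l]
    nlinarith [sq_nonneg v]
  · nlinarith [sq_nonneg (p * u + l * v), mul_nonneg (sub_nonneg.2 hl) (sq_nonneg v)]

namespace Matrix

theorem posSemidef_smul_iff {n 𝕜 : Type*} [RCLike 𝕜] {c : 𝕜} (hc : 0 < c) {M : Matrix n n 𝕜} :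
    (c • M).PosSemidef ↔ M.PosSemidef := by
  refine ⟨fun h => ?_, fun h => h.smul hc.le⟩
  simpa [smul_smul, inv_mul_cancel₀ hc.ne'] using h.smul (inv_pos.2 hc).le

theorem posSemidef_fromBlocks_zero_iff {m n R : Type*} [Fintype m] [Fintype n] [Ring R]
    [PartialOrder R] [StarRing R] [AddLeftMono R] {A : Matrix m m R} {D : Matrix n n R} :
    (fromBlocks A 0 0 D).PosSemidef ↔ A.PosSemidef ∧ D.PosSemidef := by
  refine ⟨fun h => ⟨h.submatrix Sum.inl, h.submatrix Sum.inr⟩, fun ⟨hA, hD⟩ => ?_⟩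
  rw [posSemidef_iff_dotProduct_mulVec] at *
  refine ⟨hA.1.fromBlocks (by simp) hD.1, fun x => ?_⟩
  simpa [fromBlocks_mulVec, dotProduct, Fintype.sum_sum_type] using
    add_nonneg (hA.2 (x ∘ Sum.inl)) (hD.2 (x ∘ Sum.inr))

theorem posSemidef_ofReal_two_iff (p q l : ℝ) :
    (!![(p : ℂ), l; l, q]).PosSemidef ↔ 0 ≤ p ∧ 0 ≤ q ∧ l ^ 2 ≤ p * q := by
  constructor
  · intro h
    have hp : 0 ≤ p := by simpa using h.diag_nonneg (i := 0)
    have hq : 0 ≤ q := by simpa using h.diag_nonneg (i := 1)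
    have hquad : ∀ t : ℝ, 0 ≤ p * (t * t) + 2 * l * t + q := fun t => by
      have ht := (posSemidef_iff_dotProduct_mulVec.1 h).2 ![(t : ℂ), 1]
      simp only [dotProduct, Pi.star_apply, RCLike.star_def, mulVec, of_apply, cons_val',
        cons_val_fin_one, Fin.sum_univ_two, cons_val_zero, cons_val_one, mul_one,
        Complex.conj_ofReal, map_one, one_mul] at ht
      have ht' : 0 ≤ t * (p * t + l) + (l * t + q) := by exact_mod_cast ht
      linarith
    have hdiscr := discrim_le_zero hquad
    rw [discrim] at hdiscr
    exact ⟨hp, hq, by linarith⟩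
  · rintro ⟨hp, hq, hl⟩
    rw [posSemidef_iff_dotProduct_mulVec]
    refine ⟨?_, fun x => ?_⟩
    · ext i j
      fin_cases i <;> fin_cases j <;> simp
    · have hre := quadratic_nonneg_of_sq_le_mul hp hq hl (x 0).re (x 1).re
      have him := quadratic_nonneg_of_sq_le_mul hp hq hl (x 0).im (x 1).im
      simp only [dotProduct, Pi.star_apply, RCLike.star_def, mulVec, of_apply, cons_val',
        cons_val_fin_one, Fin.sum_univ_two, cons_val_zero, cons_val_one, Complex.nonneg_iff,
        Complex.add_re, Complex.mul_re, Complex.conj_re, Complex.ofReal_re, Complex.ofReal_im,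
        zero_mul, sub_zero, Complex.conj_im, Complex.add_im, Complex.mul_im, add_zero, neg_mul,
        sub_neg_eq_add]
      exact ⟨by linarith, by ring⟩

end Matrix

/-- The Hadamard matrix without its normalising factor `1 / √2`. -/
def hadamardGate : Matrix (Fin 2) (Fin 2) ℂ := !![1, 1; 1, -1]

theorem hadamardGate_mul_self : hadamardGate * hadamardGate = (2 : ℂ) • 1 := by
  ext i j
  fin_cases i <;> fin_cases j <;> norm_num [hadamardGate]

theorem star_hadamardGate : star hadamardGate = hadamardGate := by
  ext i j
  fin_cases i <;> fin_cases j <;> simp [hadamardGate]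

theorem hadamardGate_mul_σ1_mul_hadamardGate :
    hadamardGate * σ1 * hadamardGate = (2 : ℂ) • σ3 := by
  ext i j
  fin_cases i <;> fin_cases j <;> norm_num [hadamardGate, σ1, σ3]

theorem hadamardGate_mul_σ3_mul_hadamardGate :
    hadamardGate * σ3 * hadamardGate = (2 : ℂ) • σ1 := by
  ext i j
  fin_cases i <;> fin_cases j <;> norm_num [hadamardGate, σ1, σ3]

theorem hadamardGate_mul_one_add_smul_σ1_mul_hadamardGate (a : ℂ) :
    hadamardGate * (1 + a • σ1) * hadamardGate = (2 : ℂ) • (1 + a • σ3) := by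
  rw [mul_add, add_mul, mul_one, hadamardGate_mul_self, mul_smul_comm, smul_mul_assoc,
    hadamardGate_mul_σ1_mul_hadamardGate]
  module

theorem isUnit_hadamardGate_kronecker_hadamardGate :
    IsUnit (hadamardGate ⊗ₖ hadamardGate) := by
  rw [isUnit_iff_isUnit_det, det_kronecker, hadamardGate, det_fin_two_of]
  norm_num

theorem kronecker_mul_kronecker_mul_kronecker {m n α : Type*} [Fintype m] [Fintype n]
    [CommSemiring α] (H X : Matrix m m α) (K Y : Matrix n n α) :
    (H ⊗ₖ K) * (X ⊗ₖ Y) * (H ⊗ₖ K) = (H * X * H) ⊗ₖ (K * Y * K) := by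
  rw [← mul_kronecker_mul, ← mul_kronecker_mul]

theorem hadamardGate_kronecker_conj (a b c : ℂ) :
    (hadamardGate ⊗ₖ hadamardGate) * ((1 + a • σ1) ⊗ₖ (1 + b • σ1) + c • (σ3 ⊗ₖ σ3))
        * star (hadamardGate ⊗ₖ hadamardGate)
      = (4 : ℂ) • ((1 + a • σ3) ⊗ₖ (1 + b • σ3) + c • (σ1 ⊗ₖ σ1)) := by
  rw [star_eq_conjTranspose, conjTranspose_kronecker, ← star_eq_conjTranspose, star_hadamardGate,
    mul_add, add_mul, mul_smul_comm, smul_mul_assoc, kronecker_mul_kronecker_mul_kronecker,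
    kronecker_mul_kronecker_mul_kronecker, hadamardGate_mul_one_add_smul_σ1_mul_hadamardGate,
    hadamardGate_mul_one_add_smul_σ1_mul_hadamardGate, hadamardGate_mul_σ3_mul_hadamardGate,
    smul_kronecker, kronecker_smul, smul_kronecker, kronecker_smul]
  module

/-- `inl i ↦ |i i⟩`, `inr i ↦ |i ī⟩`: the even and odd parity basis states of two qubits. -/
def parityEquiv : Fin 2 ⊕ Fin 2 ≃ Fin 2 × Fin 2 where
  toFun := Sum.elim (fun i => (i, i)) (fun i => (i, i.rev))
  invFun p := if p.1 = p.2 then Sum.inl p.1 else Sum.inr p.1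
  left_inv := by decide
  right_inv := by decide

theorem submatrix_parityEquiv (a b c : ℝ) :
    ((1 + (a : ℂ) • σ3) ⊗ₖ (1 + (b : ℂ) • σ3) + (c : ℂ) • (σ1 ⊗ₖ σ1)).submatrix
        parityEquiv parityEquiv
      = fromBlocks !![(((1 + a) * (1 + b) : ℝ) : ℂ), c; c, ((1 - a) * (1 - b) : ℝ)] 0 0
          !![(((1 + a) * (1 - b) : ℝ) : ℂ), c; c, ((1 - a) * (1 + b) : ℝ)] := by
  ext (i | i) (j | j) <;> fin_cases i <;> fin_cases j <;>
    simp [parityEquiv, σ1, σ3, -mul_eq_mul_left_iff, -mul_eq_mul_right_iff] <;> ring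

/-- for a, b ∈ [−1,1] and λ real, the matrix
`(I + a·σ1) ⊗ (I + b·σ1) + λ·(σ3⊗σ3)` is PSD iff (1 − a²)(1 − b²) ≥ λ². -/
theorem stmt6 (a b lam : ℝ) (ha : a ∈ Set.Icc (-1 : ℝ) 1) (hb : b ∈ Set.Icc (-1 : ℝ) 1) :
    ((((1 : Matrix (Fin 2) (Fin 2) ℂ) + (a : ℂ) • σ1)
        ⊗ₖ ((1 : Matrix (Fin 2) (Fin 2) ℂ) + (b : ℂ) • σ1))
      + (lam : ℂ) • (σ3 ⊗ₖ σ3)).PosSemidef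
    ↔ lam ^ 2 ≤ (1 - a ^ 2) * (1 - b ^ 2) := by
  obtain ⟨ha₁, ha₂⟩ := ha
  obtain ⟨hb₁, hb₂⟩ := hb
  rw [← isUnit_hadamardGate_kronecker_hadamardGate.posSemidef_star_right_conjugate_iff,
    hadamardGate_kronecker_conj, posSemidef_smul_iff (by norm_num),
    ← posSemidef_submatrix_equiv parityEquiv, submatrix_parityEquiv,
    posSemidef_fromBlocks_zero_iff, posSemidef_ofReal_two_iff, posSemidef_ofReal_two_iff,
    show (1 + a) * (1 + b) * ((1 - a) * (1 - b)) = (1 - a ^ 2) * (1 - b ^ 2) by ring,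
    show (1 + a) * (1 - b) * ((1 - a) * (1 + b)) = (1 - a ^ 2) * (1 - b ^ 2) by ring]
  have h₁ : 0 ≤ (1 + a) * (1 + b) := mul_nonneg (by linarith) (by linarith)
  have h₂ : 0 ≤ (1 - a) * (1 - b) := mul_nonneg (by linarith) (by linarith)
  have h₃ : 0 ≤ (1 + a) * (1 - b) := mul_nonneg (by linarith) (by linarith)
  have h₄ : 0 ≤ (1 - a) * (1 + b) := mul_nonneg (by linarith) (by linarith)
  exact ⟨fun h => h.1.2.2, fun h => ⟨⟨h₁, h₂, h⟩, ⟨h₃, h₄, h⟩⟩⟩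
end

section
/- Let λ ∈ (0, 1) and κ ∈ (−1, 1), and set D := κ²(1−λ)² − 1 (note D < 0), s := κ·((1−λ)² − 1)/D, and τ := (1−λ)·(κ² − 1)/D. Then the 4×4 complex matrix M := (1/2)(I⊗I) + (s/2)(σ1⊗I) + (τ/2)(σ1⊗σ1) − ((1−λ)/2)(σ2⊗σ2) + ((1−λ)/2)(σ3⊗σ3) is positive semidefinite if and only if κ²·(3 − 2λ)·(2λ² − 5λ + 4) ≤ 4 − 3λ; equivalently, if and only if |κ| ≤ √((4 − 3λ)/((3 − 2λ)(2λ² − 5λ + 4))). -/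
open Matrix Kronecker ComplexOrder

/-!
Since `σ2 = i J` with `J` the rotation by a quarter turn, `σ2 ⊗ σ2 = -J ⊗ J` and the matrix is
the complexification of a real symmetric matrix, so positivity can be tested on real vectors.
In the coordinates `y₀₀ ± y₁₁`, `y₀₁ ± y₁₀` its quadratic form splits into two binary quadratic
forms. For the parameters of the depolarizing channel the antisymmetric block is always positive
semidefinite, and the discriminant of the symmetric block is, up to the positive factor
`λ / (1 - κ²(1-λ)²)`, equal to `4 - 3λ - κ²(3-2λ)(2λ²-5λ+4)`.
-/

lemma quadratic_nonneg_of_sq_le {a b c : ℝ} (ha : 0 ≤ a) (hc : 0 ≤ c)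
    (hdisc : b ^ 2 ≤ 4 * a * c) (x y : ℝ) : 0 ≤ a * x ^ 2 + b * x * y + c * y ^ 2 := by
  rcases ha.eq_or_lt with rfl | ha
  · obtain rfl : b = 0 := by nlinarith
    nlinarith [mul_nonneg hc (sq_nonneg y)]
  · nlinarith [sq_nonneg (2 * a * x + b * y), mul_nonneg (sub_nonneg.2 hdisc) (sq_nonneg y)]

lemma sq_mul_le_iff_abs_le_sqrt_div {x a b : ℝ} (ha : 0 ≤ a) (hb : 0 < b) :
    x ^ 2 * b ≤ a ↔ |x| ≤ √(a / b) := by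
  rw [Real.le_sqrt (abs_nonneg x) (div_nonneg ha hb.le), sq_abs, le_div_iff₀ hb]

namespace Matrix

variable {n : Type*} [Fintype n]

lemma re_star_dotProduct_map_ofReal_mulVec (A : Matrix n n ℝ) (x : n → ℂ) :
    (star x ⬝ᵥ A.map (↑) *ᵥ x).re =
      (fun i ↦ (x i).re) ⬝ᵥ A *ᵥ (fun i ↦ (x i).re) +
        (fun i ↦ (x i).im) ⬝ᵥ A *ᵥ (fun i ↦ (x i).im) := by
  simp only [dotProduct, mulVec, Complex.re_sum, Pi.star_apply, Complex.star_def,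
    Complex.mul_re, Complex.conj_re, Complex.conj_im, map_apply, Complex.ofReal_re,
    Complex.ofReal_im, Complex.im_ofReal_mul, Finset.mul_sum, ← Finset.sum_add_distrib]
  refine Finset.sum_congr rfl fun i _ ↦ Finset.sum_congr rfl fun j _ ↦ ?_
  ring

lemma posSemidef_map_ofReal_iff {A : Matrix n n ℝ} :
    (A.map ((↑) : ℝ → ℂ)).PosSemidef ↔ A.PosSemidef := by
  have hsemi : Function.Semiconj ((↑) : ℝ → ℂ) star star := fun r ↦ by simp
  simp only [posSemidef_iff_dotProduct_mulVec, star_trivial,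
    isHermitian_map_iff hsemi Complex.ofReal_injective]
  refine and_congr_right fun hA ↦ ⟨fun h y ↦ ?_, fun h x ↦ ?_⟩
  · simpa [re_star_dotProduct_map_ofReal_mulVec] using (Complex.nonneg_iff.1 (h (y ·))).1
  · rw [Complex.nonneg_iff, re_star_dotProduct_map_ofReal_mulVec]
    exact ⟨add_nonneg (h _) (h _), ((hA.map _ hsemi).im_star_dotProduct_mulVec_self x).symm⟩

end Matrix

noncomputable def reverseChoi (lam s τ : ℝ) : Matrix (Fin 2 × Fin 2) (Fin 2 × Fin 2) ℂ :=
  (((1 : ℝ) / 2 : ℝ) • (((1 : Matrix (Fin 2) (Fin 2) ℂ) ⊗ₖ (1 : Matrix (Fin 2) (Fin 2) ℂ)))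
        + ((s / 2 : ℝ) : ℂ) • (σ1 ⊗ₖ (1 : Matrix (Fin 2) (Fin 2) ℂ))
        + ((τ / 2 : ℝ) : ℂ) • (σ1 ⊗ₖ σ1)
        - (((1 - lam) / 2 : ℝ) : ℂ) • (σ2 ⊗ₖ σ2)
        + (((1 - lam) / 2 : ℝ) : ℂ) • (σ3 ⊗ₖ σ3))

noncomputable def realChoi (lam s τ : ℝ) : Matrix (Fin 2 × Fin 2) (Fin 2 × Fin 2) ℝ :=
  (1 / 2 : ℝ) • (1 ⊗ₖ 1) + (s / 2) • (!![0, 1; 1, 0] ⊗ₖ 1)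
    + (τ / 2) • (!![0, 1; 1, 0] ⊗ₖ !![0, 1; 1, 0])
    + ((1 - lam) / 2) • (!![0, -1; 1, 0] ⊗ₖ !![0, -1; 1, 0] + !![1, 0; 0, -1] ⊗ₖ !![1, 0; 0, -1])

lemma reverseChoi_eq_map_realChoi (lam s τ : ℝ) :
    reverseChoi lam s τ = (realChoi lam s τ).map (↑) := by
  ext ⟨i, k⟩ ⟨j, l⟩
  fin_cases i <;> fin_cases k <;> fin_cases j <;> fin_cases l <;>
    simp [reverseChoi, realChoi, σ1, σ2, σ3, one_apply] <;> ring

lemma realChoi_isHermitian (lam s τ : ℝ) : (realChoi lam s τ).IsHermitian := by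
  ext ⟨i, k⟩ ⟨j, l⟩
  fin_cases i <;> fin_cases k <;> fin_cases j <;> fin_cases l <;>
    simp [realChoi, one_apply]

lemma two_mul_dotProduct_realChoi_mulVec (lam s τ : ℝ) (y : Fin 2 × Fin 2 → ℝ) :
    2 * (y ⬝ᵥ realChoi lam s τ *ᵥ y) =
      ((3 - 2 * lam + τ) / 2 * (y (0, 0) + y (1, 1)) ^ 2
          + s * (y (0, 0) + y (1, 1)) * (y (0, 1) + y (1, 0))
          + (2 * lam - 1 + τ) / 2 * (y (0, 1) + y (1, 0)) ^ 2)
        + ((1 - τ) / 2 * (y (0, 0) - y (1, 1)) ^ 2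
          + -s * (y (0, 0) - y (1, 1)) * (y (0, 1) - y (1, 0))
          + (1 - τ) / 2 * (y (0, 1) - y (1, 0)) ^ 2) := by
  simp only [dotProduct, mulVec, realChoi, one_div, zero_mul, implies_true, mul_zero, mul_one,
    kroneckerMap_one_one, smul_add, Matrix.add_apply, Matrix.smul_apply, one_apply, smul_eq_mul,
    mul_ite, kroneckerMap_apply, of_apply, cons_val', cons_val_fin_one, Fintype.sum_prod_type,
    Fin.sum_univ_two, Fin.isValue, cons_val_zero, cons_val_one, Prod.mk.injEq, and_true,
    ↓reduceIte, add_zero, zero_add, zero_ne_one, and_false, mul_neg, one_ne_zero, neg_zero,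
    neg_neg, neg_mul]
  ring

lemma realChoi_posSemidef_iff {lam s τ : ℝ} (hτ : τ ≤ 1) (hs : s ^ 2 ≤ (1 - τ) ^ 2)
    (hpos : 0 < 3 - 2 * lam + τ) :
    (realChoi lam s τ).PosSemidef ↔ s ^ 2 ≤ (1 + τ) ^ 2 - 4 * (1 - lam) ^ 2 := by
  simp only [posSemidef_iff_dotProduct_mulVec, star_trivial]
  constructor
  · rintro ⟨-, h⟩
    -- `y` kills the antisymmetric block; for `a = (3 - 2λ + τ) / 2` the symmetric block is
    -- evaluated at `(u, v) = (-s, 2a)`, where `a u² + s u v + c v² = a (4ac - s²)`.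
    set y : Fin 2 × Fin 2 → ℝ := fun p ↦ if p.1 = p.2 then -s / 2 else (3 - 2 * lam + τ) / 2
    have hy : 2 * (y ⬝ᵥ realChoi lam s τ *ᵥ y) =
        (3 - 2 * lam + τ) / 2 * ((1 + τ) ^ 2 - 4 * (1 - lam) ^ 2 - s ^ 2) := by
      rw [two_mul_dotProduct_realChoi_mulVec]
      simp only [y, Fin.isValue, ↓reduceIte, add_halves, even_two, Even.neg_pow, mul_neg,
        zero_ne_one, one_ne_zero, neg_mul, sub_self, ne_eq, OfNat.ofNat_ne_zero,
        not_false_eq_true, zero_pow, mul_zero, add_zero]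
      ring
    have hval : 0 ≤ (3 - 2 * lam + τ) / 2 * ((1 + τ) ^ 2 - 4 * (1 - lam) ^ 2 - s ^ 2) := by
      linarith [h y]
    exact sub_nonneg.1 ((mul_nonneg_iff_of_pos_left (half_pos hpos)).1 hval)
  · intro hdisc
    refine ⟨realChoi_isHermitian lam s τ, fun y ↦ ?_⟩
    have hsymm := quadratic_nonneg_of_sq_le (a := (3 - 2 * lam + τ) / 2)
      (c := (2 * lam - 1 + τ) / 2) (b := s) (by linarith) (by nlinarith) (by nlinarith)
      (y (0, 0) + y (1, 1)) (y (0, 1) + y (1, 0))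
    have hanti := quadratic_nonneg_of_sq_le (a := (1 - τ) / 2) (c := (1 - τ) / 2) (b := -s)
      (by linarith) (by linarith) (by nlinarith) (y (0, 0) - y (1, 1)) (y (0, 1) - y (1, 0))
    linarith [two_mul_dotProduct_realChoi_mulVec lam s τ y]

noncomputable def choiS (lam κ : ℝ) : ℝ :=
  κ * ((1 - lam) ^ 2 - 1) / (κ ^ 2 * (1 - lam) ^ 2 - 1)

noncomputable def choiTau (lam κ : ℝ) : ℝ :=
  (1 - lam) * (κ ^ 2 - 1) / (κ ^ 2 * (1 - lam) ^ 2 - 1)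

def choiDenom (lam κ : ℝ) : ℝ := 1 - κ ^ 2 * (1 - lam) ^ 2

section Parameters

variable {lam κ : ℝ}

lemma choiS_eq : choiS lam κ = κ * (lam * (2 - lam)) / choiDenom lam κ := by
  rw [choiS, choiDenom, ← neg_div_neg_eq]
  ring

lemma choiTau_eq : choiTau lam κ = (1 - lam) * (1 - κ ^ 2) / choiDenom lam κ := by
  rw [choiTau, choiDenom, ← neg_div_neg_eq]
  ring

lemma choiDenom_pos (hlam : lam ∈ Set.Ioo 0 1) (hκ : κ ^ 2 < 1) : 0 < choiDenom lam κ := by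
  obtain ⟨h0, h1⟩ := hlam
  rw [choiDenom]
  nlinarith [mul_le_mul_of_nonneg_left (show (1 - lam) ^ 2 ≤ 1 by nlinarith) (sq_nonneg κ)]

lemma choiTau_nonneg (hlam : lam ∈ Set.Ioo 0 1) (hκ : κ ^ 2 < 1) : 0 ≤ choiTau lam κ := by
  rw [choiTau_eq]
  exact div_nonneg (mul_nonneg (by linarith [hlam.2]) (by linarith)) (choiDenom_pos hlam hκ).le

lemma choiTau_le_one (hlam : lam ∈ Set.Ioo 0 1) (hκ : κ ^ 2 < 1) : choiTau lam κ ≤ 1 := by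
  have hQ := choiDenom_pos hlam hκ
  have key : 1 - choiTau lam κ = lam * (1 + κ ^ 2 * (1 - lam)) / choiDenom lam κ := by
    rw [choiTau_eq]
    field_simp
    rw [choiDenom]
    ring
  have : 0 ≤ lam * (1 + κ ^ 2 * (1 - lam)) / choiDenom lam κ := by
    have := hlam.1
    have := hlam.2
    positivity
  linarith

lemma choiS_sq_le (hlam : lam ∈ Set.Ioo 0 1) (hκ : κ ^ 2 < 1) :
    choiS lam κ ^ 2 ≤ (1 - choiTau lam κ) ^ 2 := by
  have hQ := choiDenom_pos hlam hκ
  have key : (1 - choiTau lam κ) ^ 2 - choiS lam κ ^ 2 =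
      lam ^ 2 * (1 - κ ^ 2) / choiDenom lam κ := by
    rw [choiTau_eq, choiS_eq]
    field_simp
    rw [choiDenom]
    ring
  have : 0 ≤ lam ^ 2 * (1 - κ ^ 2) / choiDenom lam κ :=
    div_nonneg (mul_nonneg (sq_nonneg lam) (by linarith)) hQ.le
  linarith

lemma choi_discr_eq (hlam : lam ∈ Set.Ioo 0 1) (hκ : κ ^ 2 < 1) :
    (1 + choiTau lam κ) ^ 2 - 4 * (1 - lam) ^ 2 - choiS lam κ ^ 2 =
      (4 - 3 * lam - κ ^ 2 * (3 - 2 * lam) * (2 * lam ^ 2 - 5 * lam + 4)) *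
        (lam / choiDenom lam κ) := by
  have := (choiDenom_pos hlam hκ).ne'
  rw [choiTau_eq, choiS_eq]
  field_simp
  rw [choiDenom]
  ring

lemma reverseChoi_posSemidef_iff (hlam : lam ∈ Set.Ioo 0 1) (hκ : κ ^ 2 < 1) :
    (reverseChoi lam (choiS lam κ) (choiTau lam κ)).PosSemidef ↔
      κ ^ 2 * (3 - 2 * lam) * (2 * lam ^ 2 - 5 * lam + 4) ≤ 4 - 3 * lam := by
  have hpos : 0 < 3 - 2 * lam + choiTau lam κ := by
    linarith [choiTau_nonneg hlam hκ, hlam.2]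
  rw [reverseChoi_eq_map_realChoi, Matrix.posSemidef_map_ofReal_iff,
    realChoi_posSemidef_iff (choiTau_le_one hlam hκ) (choiS_sq_le hlam hκ) hpos, ← sub_nonneg,
    choi_discr_eq hlam hκ,
    mul_nonneg_iff_of_pos_right (div_pos hlam.1 (choiDenom_pos hlam hκ)), sub_nonneg]

end Parameters

/-- reverse-direction Choi matrix of the depolarizing channel.
With D := κ²(1−λ)²−1, s := κ((1−λ)²−1)/D, τ := (1−λ)(κ²−1)/D, the matrix
`½ I⊗I + (s/2) σ1⊗I + (τ/2) σ1⊗σ1 − ((1−λ)/2) σ2⊗σ2 + ((1−λ)/2) σ3⊗σ3`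
is PSD iff κ²(3−2λ)(2λ²−5λ+4) ≤ 4−3λ, equivalently iff
|κ| ≤ √((4−3λ)/((3−2λ)(2λ²−5λ+4))). -/
theorem stmt7 (lam κ D s τ : ℝ) (hlam : lam ∈ Set.Ioo (0 : ℝ) 1)
    (hκ : κ ∈ Set.Ioo (-1 : ℝ) 1)
    (hD : D = κ ^ 2 * (1 - lam) ^ 2 - 1)
    (hs : s = κ * ((1 - lam) ^ 2 - 1) / D)
    (hτ : τ = (1 - lam) * (κ ^ 2 - 1) / D) :
    ((((1 : ℝ) / 2 : ℝ) • (((1 : Matrix (Fin 2) (Fin 2) ℂ) ⊗ₖ (1 : Matrix (Fin 2) (Fin 2) ℂ)))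
        + ((s / 2 : ℝ) : ℂ) • (σ1 ⊗ₖ (1 : Matrix (Fin 2) (Fin 2) ℂ))
        + ((τ / 2 : ℝ) : ℂ) • (σ1 ⊗ₖ σ1)
        - (((1 - lam) / 2 : ℝ) : ℂ) • (σ2 ⊗ₖ σ2)
        + (((1 - lam) / 2 : ℝ) : ℂ) • (σ3 ⊗ₖ σ3)).PosSemidef
      ↔ κ ^ 2 * (3 - 2 * lam) * (2 * lam ^ 2 - 5 * lam + 4) ≤ 4 - 3 * lam)
    ∧
    ((((1 : ℝ) / 2 : ℝ) • (((1 : Matrix (Fin 2) (Fin 2) ℂ) ⊗ₖ (1 : Matrix (Fin 2) (Fin 2) ℂ)))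
        + ((s / 2 : ℝ) : ℂ) • (σ1 ⊗ₖ (1 : Matrix (Fin 2) (Fin 2) ℂ))
        + ((τ / 2 : ℝ) : ℂ) • (σ1 ⊗ₖ σ1)
        - (((1 - lam) / 2 : ℝ) : ℂ) • (σ2 ⊗ₖ σ2)
        + (((1 - lam) / 2 : ℝ) : ℂ) • (σ3 ⊗ₖ σ3)).PosSemidef
      ↔ |κ| ≤ Real.sqrt ((4 - 3 * lam) / ((3 - 2 * lam) * (2 * lam ^ 2 - 5 * lam + 4)))) := by
  subst hD hs hτ
  have hκ2 : κ ^ 2 < 1 := by rwa [sq_lt_one_iff_abs_lt_one, abs_lt]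
  have hpsd := reverseChoi_posSemidef_iff hlam hκ2
  have hb : 0 < (3 - 2 * lam) * (2 * lam ^ 2 - 5 * lam + 4) := by
    nlinarith [hlam.1, hlam.2, sq_nonneg (lam - 5 / 4)]
  have hsqrt := sq_mul_le_iff_abs_le_sqrt_div (x := κ) (a := 4 - 3 * lam)
    (by linarith [hlam.2]) hb
  rw [← mul_assoc] at hsqrt
  exact ⟨hpsd, hpsd.trans hsqrt⟩
end

section
/- Let λ ∈ (0, 1) and κ ∈ ℝ with κ²(1−λ)² < 1. Then the inequality ((κ²(1−λ) − 1)·(2 − λ))² / (κ²(1−λ)² − 1)² ≥ (κ·((1−λ)² − 1))² / (κ²(1−λ)² − 1)² + 4(1−λ)² holds if and only if κ²·(3 − 2λ)·(2λ² − 5λ + 4) ≤ 4 − 3λ. -/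
/-- algebraic simplification step for the positivity of the reconstructed
reverse-direction Choi matrix of the depolarizing channel. -/
theorem stmt8 (lam κ : ℝ) (hlam : lam ∈ Set.Ioo (0 : ℝ) 1)
    (h : κ ^ 2 * (1 - lam) ^ 2 < 1) :
    ((κ ^ 2 * (1 - lam) - 1) * (2 - lam)) ^ 2 / (κ ^ 2 * (1 - lam) ^ 2 - 1) ^ 2
      ≥ (κ * ((1 - lam) ^ 2 - 1)) ^ 2 / (κ ^ 2 * (1 - lam) ^ 2 - 1) ^ 2
          + 4 * (1 - lam) ^ 2
    ↔ κ ^ 2 * (3 - 2 * lam) * (2 * lam ^ 2 - 5 * lam + 4) ≤ 4 - 3 * lam := by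
  obtain ⟨h0, h1⟩ := hlam
  have hne : κ ^ 2 * (1 - lam) ^ 2 - 1 ≠ 0 := by nlinarith
  have hD : (0:ℝ) < (κ ^ 2 * (1 - lam) ^ 2 - 1) ^ 2 := by positivity
  have hP : (0:ℝ) < lam * (1 - κ ^ 2 * (1 - lam) ^ 2) := by
    apply mul_pos h0; linarith
  set L := ((κ ^ 2 * (1 - lam) - 1) * (2 - lam)) ^ 2 with hL
  set B := (κ * ((1 - lam) ^ 2 - 1)) ^ 2 with hB
  set D := (κ ^ 2 * (1 - lam) ^ 2 - 1) ^ 2 with hDdef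
  have key : L - (B + 4 * (1 - lam) ^ 2 * D)
      = lam * (1 - κ ^ 2 * (1 - lam) ^ 2) *
        ((4 - 3 * lam) - κ ^ 2 * (3 - 2 * lam) * (2 * lam ^ 2 - 5 * lam + 4)) := by
    rw [hL, hB, hDdef]; ring
  have step : L / D ≥ B / D + 4 * (1 - lam) ^ 2 ↔
      0 ≤ L - (B + 4 * (1 - lam) ^ 2 * D) := by
    rw [ge_iff_le, ← sub_nonneg]
    have hEq : L / D - (B / D + 4 * (1 - lam) ^ 2)
        = (L - (B + 4 * (1 - lam) ^ 2 * D)) / D := by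
      field_simp
    rw [hEq, div_nonneg_iff]
    constructor
    · rintro (⟨hn, _⟩ | ⟨_, hd⟩)
      · exact hn
      · linarith
    · intro hn; exact Or.inl ⟨hn, le_of_lt hD⟩
  rw [step, key]
  rw [mul_nonneg_iff_of_pos_left hP]
  constructor <;> intro <;> linarith
end

section
/- Let κ ∈ {−1, 1} and λ2, λ3 ∈ ℝ. Then the 4×4 complex matrix (1/2)(I⊗I) + (κ/2)(σ1⊗I) + (λ2/2)(σ2⊗σ2) + (λ3/2)(σ3⊗σ3) is positive semidefinite if and only if λ2 = 0 and λ3 = 0. -/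
/-!
For κ² = 1 the matrix with λ2 = λ3 = 0 is P ⊗ 1, where P = (1 + κσ1)/2 is the projection onto
the κ-eigenline of σ1, hence positive semidefinite. Conversely, u = (1, -κ) ⊗ e₀ lies in the
kernel of P ⊗ 1, and σ2, σ3 anticommute with σ1, so they map the (-κ)-eigenline of σ1 into its
orthogonal complement: the quadratic form of the whole matrix vanishes at u. A positive
semidefinite matrix must then annihilate u, but the image of u has components -λ2/2 and λ3/2.
-/

open Matrix Kronecker ComplexOrder

open scoped MatrixOrder

theorem isStarProjection_half_one_add_smul {R : Type*} [Ring R] [StarRing R] [Algebra ℂ R]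
    [StarModule ℂ R] {u : R} (hu : IsSelfAdjoint u) (hu2 : u * u = 1) {κ : ℝ} (hκ : κ ^ 2 = 1) :
    IsStarProjection ((1 / 2 : ℂ) • (1 + (κ : ℂ) • u)) where
  isIdempotentElem := by
    have hκ' : (κ : ℂ) * κ = 1 := by exact_mod_cast (sq κ).symm.trans hκ
    rw [IsIdempotentElem, smul_mul_smul_comm, add_mul, mul_add, mul_add, one_mul, mul_one, one_mul,
      smul_mul_smul_comm, hu2, hκ', one_smul]
    module
  isSelfAdjoint := by
    simp [IsSelfAdjoint, star_smul, hu.star_eq]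

theorem isSelfAdjoint_σ1 : IsSelfAdjoint σ1 := by
  ext i j
  fin_cases i <;> fin_cases j <;> simp [σ1]

theorem σ1_mul_self : σ1 * σ1 = 1 := by
  ext i j
  fin_cases i <;> fin_cases j <;> simp [σ1]

noncomputable def pauliChoiMatrix (κ lam2 lam3 : ℝ) : Matrix (Fin 2 × Fin 2) (Fin 2 × Fin 2) ℂ :=
  ((1 : ℝ) / 2 : ℝ) • ((1 : Matrix (Fin 2) (Fin 2) ℂ) ⊗ₖ (1 : Matrix (Fin 2) (Fin 2) ℂ))
    + ((κ / 2 : ℝ) : ℂ) • (σ1 ⊗ₖ (1 : Matrix (Fin 2) (Fin 2) ℂ))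
    + ((lam2 / 2 : ℝ) : ℂ) • (σ2 ⊗ₖ σ2)
    + ((lam3 / 2 : ℝ) : ℂ) • (σ3 ⊗ₖ σ3)

theorem pauliChoiMatrix_zero_zero (κ : ℝ) :
    pauliChoiMatrix κ 0 0 = ((1 / 2 : ℂ) • (1 + (κ : ℂ) • σ1)) ⊗ₖ 1 := by
  simp only [pauliChoiMatrix, add_kronecker, smul_kronecker, zero_div, Complex.ofReal_zero,
    zero_smul, add_zero, smul_add, smul_smul]
  push_cast
  module

noncomputable def nullVector (κ : ℝ) : Fin 2 × Fin 2 → ℂ :=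
  fun ij => if ij.2 = 0 then ![1, -(κ : ℂ)] ij.1 else 0

theorem pauliChoiMatrix_mulVec_nullVector (κ lam2 lam3 : ℝ) :
    pauliChoiMatrix κ lam2 lam3 *ᵥ nullVector κ = fun ij : Fin 2 × Fin 2 =>
      ![![(1 + lam3 - κ ^ 2 : ℂ) / 2, -κ * lam2 / 2], ![κ * lam3 / 2, -lam2 / 2]] ij.1 ij.2 := by
  ext ⟨i, j⟩
  fin_cases i <;> fin_cases j <;>
    simp [pauliChoiMatrix, nullVector, mulVec, dotProduct, Fintype.sum_prod_type, σ1, σ2, σ3] <;>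
    ring

theorem star_nullVector_dotProduct_pauliChoiMatrix_mulVec (κ lam2 lam3 : ℝ) :
    star (nullVector κ) ⬝ᵥ pauliChoiMatrix κ lam2 lam3 *ᵥ nullVector κ =
      (1 - κ ^ 2) * (1 + lam3) / 2 := by
  simp [pauliChoiMatrix_mulVec_nullVector, nullVector, dotProduct, Fintype.sum_prod_type]
  ring

/-- reverse-direction Choi matrix of a Pauli channel in the
boundary case |κ| = 1. -/
theorem stmt10 (κ lam2 lam3 : ℝ) (hκ : κ = -1 ∨ κ = 1) :
    (((1 : ℝ) / 2 : ℝ) • (((1 : Matrix (Fin 2) (Fin 2) ℂ) ⊗ₖ (1 : Matrix (Fin 2) (Fin 2) ℂ)))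
        + ((κ / 2 : ℝ) : ℂ) • (σ1 ⊗ₖ (1 : Matrix (Fin 2) (Fin 2) ℂ))
        + ((lam2 / 2 : ℝ) : ℂ) • (σ2 ⊗ₖ σ2)
        + ((lam3 / 2 : ℝ) : ℂ) • (σ3 ⊗ₖ σ3)).PosSemidef
    ↔ (lam2 = 0 ∧ lam3 = 0) := by
  have hκ2 : κ ^ 2 = 1 := by rcases hκ with rfl | rfl <;> norm_num
  have hκ2' : (κ : ℂ) ^ 2 = 1 := by exact_mod_cast hκ2
  change (pauliChoiMatrix κ lam2 lam3).PosSemidef ↔ _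
  constructor
  · intro hM
    have hker : pauliChoiMatrix κ lam2 lam3 *ᵥ nullVector κ = 0 :=
      (hM.dotProduct_mulVec_zero_iff _).mp <| by
        rw [star_nullVector_dotProduct_pauliChoiMatrix_mulVec, hκ2', sub_self, zero_mul, zero_div]
    rw [pauliChoiMatrix_mulVec_nullVector] at hker
    have h00 : (1 + lam3 - κ ^ 2 : ℂ) / 2 = 0 := congrFun hker (0, 0)
    have h11 : (-lam2 / 2 : ℂ) = 0 := congrFun hker (1, 1)
    exact ⟨by simpa using h11, by simpa [hκ2'] using h00⟩
  · rintro ⟨rfl, rfl⟩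
    rw [pauliChoiMatrix_zero_zero]
    exact (isStarProjection_half_one_add_smul isSelfAdjoint_σ1 σ1_mul_self hκ2).nonneg.posSemidef
      |>.kronecker PosSemidef.one
end

section
/- Let λ : {1,2,3} → [0,1], η : {1,2,3} → [−1,1], and ζ : {1,2,3} → [−1,1]. For x1, x2 ∈ {0,1} and y1, y2 ∈ {1,2,3}, define Q(x2|x1,y1,y2) := 1/2 if y1 ≠ y2, and Q(x2|x1,y1,y1) := (1 − λ(y1))/2 + λ(y1)·[x2 = x1]; define A(x1|y1) := (1 − η(y1))/2 + η(y1)·x1 and B(x2|y2) := (1 − ζ(y2))/2 + ζ(y2)·x2. Assume the two-qubit condition (C1): for all y1, y2 ∈ {1,2,3} and x2 ∈ {0,1}, Σ_{x1∈{0,1}} Q(x2|x1,y1,y2) = 2·B(x2|y2) − Σ_{y'∈{1,2,3}} (Σ_{x1∈{0,1}} (−1)^{x1}·A(x1|y')) · (Σ_{x1'∈{0,1}} (−1)^{x1'}·Q(x2|x1',y',y2)). Assume also the non-signaling condition Y1−Y2−X2: for all y1, y2 ∈ {1,2,3} and x2 ∈ {0,1}, Σ_{x1∈{0,1}} A(x1|y1)·Q(x2|x1,y1,y2)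 = B(x2|y2). Then ζ(y) = 0 and η(y)·λ(y) = 0 for every y ∈ {1,2,3}. -/
open Finset

/-- in the symmetric conditional model of the two-qubit Pauli experiment,
condition (C1) together with the non-signaling condition Y1−Y2−X2 forces ζ(y) = 0 and
η(y)·λ(y) = 0 for every y. -/
theorem stmt12 (lam eta zeta : Fin 3 → ℝ)
    (hlam : ∀ y, lam y ∈ Set.Icc (0 : ℝ) 1)
    (heta : ∀ y, eta y ∈ Set.Icc (-1 : ℝ) 1)
    (hzeta : ∀ y, zeta y ∈ Set.Icc (-1 : ℝ) 1)
    (Q : Fin 2 → Fin 2 → Fin 3 → Fin 3 → ℝ)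
    (A : Fin 2 → Fin 3 → ℝ) (B : Fin 2 → Fin 3 → ℝ)
    (hQ : ∀ x2 x1 y1 y2, Q x2 x1 y1 y2 =
      if y1 = y2 then (1 - lam y1) / 2 + lam y1 * (if x2 = x1 then 1 else 0)
      else 1 / 2)
    (hA : ∀ x1 y1, A x1 y1 = (1 - eta y1) / 2 + eta y1 * (x1 : ℕ))
    (hB : ∀ x2 y2, B x2 y2 = (1 - zeta y2) / 2 + zeta y2 * (x2 : ℕ))
    (hC1 : ∀ y1 y2 : Fin 3, ∀ x2 : Fin 2,
      ∑ x1 : Fin 2, Q x2 x1 y1 y2 =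
        2 * B x2 y2 -
          ∑ y' : Fin 3,
            (∑ x1 : Fin 2, (-1 : ℝ) ^ (x1 : ℕ) * A x1 y') *
              (∑ x1' : Fin 2, (-1 : ℝ) ^ (x1' : ℕ) * Q x2 x1' y' y2))
    (hNS : ∀ y1 y2 : Fin 3, ∀ x2 : Fin 2,
      ∑ x1 : Fin 2, A x1 y1 * Q x2 x1 y1 y2 = B x2 y2) :
    ∀ y : Fin 3, zeta y = 0 ∧ eta y * lam y = 0 := by
  intro y
  fin_cases y
  · have h1 := hNS 1 0 0
    have h2 := hC1 0 0 0
    simp [hQ, hA, hB, Fin.sum_univ_two, Fin.sum_univ_three] at h1 h2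
    exact ⟨show zeta 0 = 0 by linarith, show eta 0 * lam 0 = 0 by linarith⟩
  · have h1 := hNS 0 1 0
    have h2 := hC1 1 1 0
    simp [hQ, hA, hB, Fin.sum_univ_two, Fin.sum_univ_three] at h1 h2
    exact ⟨show zeta 1 = 0 by linarith, show eta 1 * lam 1 = 0 by linarith⟩
  · have h1 := hNS 0 2 0
    have h2 := hC1 2 2 0
    simp [hQ, hA, hB, Fin.sum_univ_two, Fin.sum_univ_three] at h1 h2
    exact ⟨show zeta 2 = 0 by linarith, show eta 2 * lam 2 = 0 by linarith⟩
end

section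
/- For every λ ∈ (0, 1), the 4×4 complex matrix M := I ⊗ ((I + σ3)/2) + (1/2)(σ1⊗σ1) + ((1 − 2λ)/2)(σ2⊗σ2) is not positive semidefinite. More precisely, its eigenvalues are (1 + √(1 + 4λ²))/2, (1 − √(1 + 4λ²))/2, (1 + √(1 + 4(1−λ)²))/2, and (1 − √(1 + 4(1−λ)²))/2, and the eigenvalue (1 − √(1 + 4λ²))/2 is strictly negative. -/
/-
After reindexing along `Fin 2 × Fin 2 ≃ Fin 4`, the matrix is the Choi matrix
`[[1,0,0,λ],[0,0,1−λ,0],[0,1−λ,1,0],[λ,0,0,0]]`. It is block diagonal, with blocks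
`[[1,λ],[λ,0]]` on span{e₀, e₃} and `[[0,1−λ],[1−λ,1]]` on span{e₁, e₂}, whose characteristic
polynomials `X² − X − λ²` and `X² − X − (1−λ)²` give the four roots by the quadratic formula.
Positivity fails on the test vector `v = (λ, 0, 0, −1)`, where `⟨v, Mv⟩ = −λ²`.
-/

open Matrix Kronecker ComplexOrder Polynomial

theorem X_sub_C_mul_X_sub_C {R : Type*} [CommRing R] (a b : R) :
    (X - C a) * (X - C b) = X ^ 2 - C (a + b) * X + C (a * b) := by
  simp only [C_add, C_mul]
  ring

theorem X_sub_C_mul_X_sub_C_eq_X_sq_sub_X_sub_C (p : ℝ) (hp : 0 ≤ 1 + 4 * p) :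
    (X - C (((1 + √(1 + 4 * p)) / 2 : ℝ) : ℂ)) *
        (X - C (((1 - √(1 + 4 * p)) / 2 : ℝ) : ℂ)) =
      X ^ 2 - X - C (p : ℂ) := by
  have hsq := Real.sq_sqrt hp
  have hsum :
      (((1 + √(1 + 4 * p)) / 2 : ℝ) : ℂ) + (((1 - √(1 + 4 * p)) / 2 : ℝ) : ℂ) = 1 := by
    push_cast
    ring
  have hprod :
      (((1 + √(1 + 4 * p)) / 2 : ℝ) : ℂ) * (((1 - √(1 + 4 * p)) / 2 : ℝ) : ℂ) = -p := by
    rw [← Complex.ofReal_mul, ← Complex.ofReal_neg]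
    congr 1
    linear_combination -hsq / 4
  rw [X_sub_C_mul_X_sub_C, hsum, hprod, C_1, C_neg]
  ring

def choiMatrix {R : Type*} [Ring R] (l : R) : Matrix (Fin 4) (Fin 4) R :=
  !![1, 0, 0, l; 0, 0, 1 - l, 0; 0, 1 - l, 1, 0; l, 0, 0, 0]

theorem charpoly_choiMatrix {R : Type*} [CommRing R] (l : R) :
    (choiMatrix l).charpoly = (X ^ 2 - X - C (l ^ 2)) * (X ^ 2 - X - C ((1 - l) ^ 2)) := by
  have hcharmatrix : (choiMatrix l).charmatrix =
      !![X - 1, 0, 0, -C l; 0, X, -C (1 - l), 0; 0, -C (1 - l), X - 1, 0; -C l, 0, 0, X] := by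
    ext i j
    fin_cases i <;> fin_cases j <;> simp [choiMatrix]
  rw [charpoly, hcharmatrix, det_succ_row_zero]
  simp [Fin.sum_univ_succ, det_fin_three, Fin.succAbove]
  ring

theorem not_posSemidef_choiMatrix {l : ℝ} (hl : l ≠ 0) :
    ¬ (choiMatrix (l : ℂ)).PosSemidef := fun hpsd => by
  have hv := hpsd.dotProduct_mulVec_nonneg ![(l : ℂ), 0, 0, -1]
  have hneg :
      star ![(l : ℂ), 0, 0, -1] ⬝ᵥ (choiMatrix (l : ℂ) *ᵥ ![(l : ℂ), 0, 0, -1]) =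
        ((-l ^ 2 : ℝ) : ℂ) := by
    simp [choiMatrix, mulVec, dotProduct, Fin.sum_univ_four]
    ring
  rw [hneg, Complex.zero_le_real] at hv
  have hpos : 0 < l ^ 2 := by positivity
  linarith

theorem pauli_sum_eq_submatrix_choiMatrix (lam : ℝ) :
    (1 : Matrix (Fin 2) (Fin 2) ℂ)
          ⊗ₖ ((((1 : ℝ) / 2 : ℝ) : ℂ) • ((1 : Matrix (Fin 2) (Fin 2) ℂ) + σ3))
        + (((1 : ℝ) / 2 : ℝ) : ℂ) • (σ1 ⊗ₖ σ1)
        + (((1 - 2 * lam) / 2 : ℝ) : ℂ) • (σ2 ⊗ₖ σ2)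
      = (choiMatrix (lam : ℂ)).submatrix finProdFinEquiv finProdFinEquiv := by
  ext ⟨a, b⟩ ⟨c, d⟩
  fin_cases a <;> fin_cases b <;> fin_cases c <;> fin_cases d <;>
    simp [choiMatrix, σ1, σ2, σ3, one_apply, finProdFinEquiv] <;> ring_nf

theorem charpoly_submatrix_equiv {n m R : Type*} [Fintype n] [DecidableEq n] [Fintype m]
    [DecidableEq m] [CommRing R] (M : Matrix m m R) (e : n ≃ m) :
    (M.submatrix e e).charpoly = M.charpoly :=
  charpoly_reindex e.symm M

/-- for λ ∈ (0,1) the matrix `I ⊗ ((I+σ3)/2) + ½ σ1⊗σ1 + ((1−2λ)/2) σ2⊗σ2`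
is not positive semidefinite; its characteristic polynomial has the four stated roots and
(1 − √(1+4λ²))/2 < 0. -/
theorem stmt14 (lam : ℝ) (hlam : lam ∈ Set.Ioo (0 : ℝ) 1) :
    ¬ (((1 : Matrix (Fin 2) (Fin 2) ℂ)
          ⊗ₖ ((((1 : ℝ) / 2 : ℝ) : ℂ) • ((1 : Matrix (Fin 2) (Fin 2) ℂ) + σ3)))
        + (((1 : ℝ) / 2 : ℝ) : ℂ) • (σ1 ⊗ₖ σ1)
        + (((1 - 2 * lam) / 2 : ℝ) : ℂ) • (σ2 ⊗ₖ σ2)).PosSemidef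
    ∧
    (((1 : Matrix (Fin 2) (Fin 2) ℂ)
          ⊗ₖ ((((1 : ℝ) / 2 : ℝ) : ℂ) • ((1 : Matrix (Fin 2) (Fin 2) ℂ) + σ3)))
        + (((1 : ℝ) / 2 : ℝ) : ℂ) • (σ1 ⊗ₖ σ1)
        + (((1 - 2 * lam) / 2 : ℝ) : ℂ) • (σ2 ⊗ₖ σ2)).charpoly
      = (X - C (((1 + Real.sqrt (1 + 4 * lam ^ 2)) / 2 : ℝ) : ℂ)) *
          (X - C (((1 - Real.sqrt (1 + 4 * lam ^ 2)) / 2 : ℝ) : ℂ)) *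
          (X - C (((1 + Real.sqrt (1 + 4 * (1 - lam) ^ 2)) / 2 : ℝ) : ℂ)) *
          (X - C (((1 - Real.sqrt (1 + 4 * (1 - lam) ^ 2)) / 2 : ℝ) : ℂ))
    ∧
    (1 - Real.sqrt (1 + 4 * lam ^ 2)) / 2 < 0 := by
  obtain ⟨hlam0, -⟩ := hlam
  rw [pauli_sum_eq_submatrix_choiMatrix]
  refine ⟨?_, ?_, ?_⟩
  · rw [posSemidef_submatrix_equiv]
    exact not_posSemidef_choiMatrix hlam0.ne'
  · rw [charpoly_submatrix_equiv, charpoly_choiMatrix, mul_assoc,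
      X_sub_C_mul_X_sub_C_eq_X_sq_sub_X_sub_C _ (by positivity),
      X_sub_C_mul_X_sub_C_eq_X_sq_sub_X_sub_C _ (by positivity)]
    push_cast
    ring
  · have hsqrt : 1 < √(1 + 4 * lam ^ 2) := by
      rw [Real.lt_sqrt zero_le_one]
      nlinarith
    linarith
end

section
/- Assume conditions (A1) and (A3). Let (ρ1, C) be a memoryless sequential strategy and let P denote its generated statistics. Then the reconstructed Choi matrix recovers C exactly: Ĉ[P] = C. -/
open Matrix Kronecker ComplexOrder BigOperators

noncomputable section

/-- The rank-one projection |v⟩⟨v| associated with a vector v ∈ ℂ^d. -/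
def outer {d : ℕ} (v : Fin d → ℂ) : Matrix (Fin d) (Fin d) ℂ :=
  Matrix.vecMulVec v (star v)

/-- Partial trace over the first tensor factor. -/
def ptrace1 {d : ℕ} (C : Matrix (Fin d × Fin d) (Fin d × Fin d) ℂ) :
    Matrix (Fin d) (Fin d) ℂ :=
  Matrix.of fun j j' => ∑ i : Fin d, C (i, j) (i, j')

/-- Partial trace over the second tensor factor. -/
def ptrace2 {d : ℕ} (C : Matrix (Fin d × Fin d) (Fin d × Fin d) ℂ) :
    Matrix (Fin d) (Fin d) ℂ :=
  Matrix.of fun i i' => ∑ j : Fin d, C (i, j) (i', j)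

/-- Partial transpose on the first tensor factor. -/
def ptranspose1 {d : ℕ} (C : Matrix (Fin d × Fin d) (Fin d × Fin d) ℂ) :
    Matrix (Fin d × Fin d) (Fin d × Fin d) ℂ :=
  Matrix.of fun p q => C (q.1, p.2) (p.1, q.2)

/-- The channel Λ_C(ρ) := Tr₁[C^{T1}(ρ⊗I)] associated with a Choi matrix C. -/
def chan {d : ℕ} (C : Matrix (Fin d × Fin d) (Fin d × Fin d) ℂ)
    (ρ : Matrix (Fin d) (Fin d) ℂ) : Matrix (Fin d) (Fin d) ℂ :=
  ptrace1 (ptranspose1 C * (ρ ⊗ₖ (1 : Matrix (Fin d) (Fin d) ℂ)))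

/-- The family G_t: G_0 = I and G_{(y,z)} = Σ_x g_{x|y,z}·E_{x|y}. -/
def Gfam {d : ℕ} {Y : Type*} [Fintype Y] (w : Y → Fin d → Fin d → ℂ)
    (g : Y → Fin d → Fin (d - 1) → ℝ) : Option (Y × Fin (d - 1)) → Matrix (Fin d) (Fin d) ℂ
  | none => 1
  | some (y, z) => ∑ x : Fin d, (g y x z : ℂ) • outer (w y x)

/-- The coefficients g_{x|t}, with g_{x|0} := 1. -/
def gfam {d : ℕ} {Y : Type*} (g : Y → Fin d → Fin (d - 1) → ℝ) :
    Option (Y × Fin (d - 1)) → Fin d → ℝ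
  | none, _ => 1
  | some (y, z), x => g y x z

/-- The measurement label y(t), with y(0) replaced by a fixed element y₀. -/
def yOf {d : ℕ} {Y : Type*} (y₀ : Y) : Option (Y × Fin (d - 1)) → Y
  | none => y₀
  | some (y, _) => y

/-- Single-site statistics P(x1|y1) = ⟨x1,y1|ρ1|x1,y1⟩. -/
def P1 {d : ℕ} {Y : Type*} (w : Y → Fin d → Fin d → ℂ) (ρ1 : Matrix (Fin d) (Fin d) ℂ)
    (x1 : Fin d) (y1 : Y) : ℂ :=
  star (w y1 x1) ⬝ᵥ ρ1.mulVec (w y1 x1)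

/-- Two-site statistics P(x2|x1,y1,y2) = ⟨x2,y2|Λ_C(|x1,y1⟩⟨x1,y1|)|x2,y2⟩. -/
def P2 {d : ℕ} {Y : Type*} (w : Y → Fin d → Fin d → ℂ)
    (C : Matrix (Fin d × Fin d) (Fin d × Fin d) ℂ)
    (x2 : Fin d) (y2 : Y) (x1 : Fin d) (y1 : Y) : ℂ :=
  star (w y2 x2) ⬝ᵥ (chan C (outer (w y1 x1))).mulVec (w y2 x2)

/-- Statistics with trivial first measurement: P(x2|0,y2) = ⟨x2,y2|Λ_C(ρ1)|x2,y2⟩. -/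
def P20 {d : ℕ} {Y : Type*} (w : Y → Fin d → Fin d → ℂ)
    (ρ1 : Matrix (Fin d) (Fin d) ℂ) (C : Matrix (Fin d × Fin d) (Fin d × Fin d) ℂ)
    (x2 : Fin d) (y2 : Y) : ℂ :=
  star (w y2 x2) ⬝ᵥ (chan C ρ1).mulVec (w y2 x2)

/-- The reconstructed Choi matrix Ĉ[P] built from abstract statistics
(p1, p2, p20), the coefficients g, the dual basis H, and a fixed label y₀. -/
def ChatP {d : ℕ} {Y : Type*} [Fintype Y] [DecidableEq Y] (y₀ : Y)
    (g : Y → Fin d → Fin (d - 1) → ℝ)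
    (H : Option (Y × Fin (d - 1)) → Matrix (Fin d) (Fin d) ℂ)
    (p1 : Fin d → Y → ℂ)
    (p2 : Fin d → Y → Fin d → Y → ℂ)
    (p20 : Fin d → Y → ℂ) : Matrix (Fin d × Fin d) (Fin d × Fin d) ℂ :=
  (∑ t1 : Y × Fin (d - 1), ∑ t2 : Option (Y × Fin (d - 1)),
      (∑ x1 : Fin d, ∑ x2 : Fin d,
          (g t1.1 x1 t1.2 : ℂ) * (gfam g t2 x2 : ℂ) * p2 x2 (yOf y₀ t2) x1 t1.1)
        • ((H (some t1)).transpose ⊗ₖ H t2))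
  + (∑ t2 : Option (Y × Fin (d - 1)),
      ((∑ x2 : Fin d, (gfam g t2 x2 : ℂ) * p20 x2 (yOf y₀ t2))
        - ∑ t1 : Y × Fin (d - 1), ∑ t1' : Y × Fin (d - 1),
            (∑ x1 : Fin d, (g t1.1 x1 t1.2 : ℂ) * p1 x1 t1.1)
              * (H (some t1) * H (some t1')).trace
              * (∑ x1' : Fin d, ∑ x2 : Fin d,
                  (g t1'.1 x1' t1'.2 : ℂ) * (gfam g t2 x2 : ℂ) * p2 x2 (yOf y₀ t2) x1' t1'.1))
        • ((1 : Matrix (Fin d) (Fin d) ℂ) ⊗ₖ H t2))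

end

/-!
The families `G` and `H` are dual frames for the trace pairing, hence so are `Gᵀ ⊗ G` and
`Hᵀ ⊗ H` on the bipartite space, and `C = ∑ Tr((G_{t₁}ᵀ ⊗ G_{t₂}) C) • H_{t₁}ᵀ ⊗ H_{t₂}`.
Each coefficient equals `Tr(G_{t₂} Λ_C(G_{t₁}))`, which for `t₁ ≠ 0` is the `g`-weighted sum of
the two-step statistics. For `t₁ = 0` the coefficient is not measured directly: expanding
`ρ₁ = H₀ + ∑ Tr(G_{t₁} ρ₁) H_{t₁}` and `H_{t₁} = ∑ h_{t₁,t₁'} G_{t₁'}` shows that the corrected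
coefficient in `Ĉ[P]` is `Tr(G_{t₂} Λ_C(H₀))`, and `H₀ = I/d` because the `G_{y,z}` are traceless.
-/

theorem Matrix.sum_kronecker_sum {R n m ι κ : Type*} [CommSemiring R] (s : Finset ι) (t : Finset κ)
    (A : ι → Matrix n n R) (B : κ → Matrix m m R) :
    (∑ i ∈ s, A i) ⊗ₖ (∑ j ∈ t, B j) = ∑ i ∈ s, ∑ j ∈ t, A i ⊗ₖ B j := by
  ext
  simp only [kroneckerMap_apply, sum_apply, Finset.sum_mul_sum]

def IsDualFrame {R n ι : Type*} [CommRing R] [Fintype n] [Fintype ι]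
    (G H : ι → Matrix n n R) : Prop :=
  ∀ M : Matrix n n R, ∑ t, (G t * M).trace • H t = M

namespace IsDualFrame

variable {R n m ι κ : Type*} [CommRing R] [Fintype n] [Fintype m] [Fintype ι] [Fintype κ]
  {G H : ι → Matrix n n R}

theorem symm (h : IsDualFrame G H) : IsDualFrame H G := fun M ↦
  ext_iff_trace_mul_left.mpr fun K ↦ by
    calc (K * ∑ t, (H t * M).trace • G t).trace
        = ((∑ t, (G t * K).trace • H t) * M).trace := by
          simp only [Matrix.mul_sum, Matrix.sum_mul, trace_sum, smul_mul, trace_smul,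
            smul_eq_mul, trace_mul_comm K]
          exact Finset.sum_congr rfl fun _ _ ↦ mul_comm _ _
      _ = (K * M).trace := by rw [h K]

theorem transpose (h : IsDualFrame G H) : IsDualFrame (fun t ↦ (G t)ᵀ) (fun t ↦ (H t)ᵀ) :=
  fun M ↦ by
    conv_rhs => rw [← transpose_transpose M, ← h Mᵀ]
    simp only [transpose_sum, transpose_smul, ← trace_transpose (G _ * Mᵀ), transpose_mul,
      transpose_transpose, trace_mul_comm M]

theorem kronecker_apply_kronecker {G' H' : κ → Matrix m m R} (h : IsDualFrame G H)
    (h' : IsDualFrame G' H') (A : Matrix n n R) (B : Matrix m m R) :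
    ∑ p : ι × κ, ((G p.1 ⊗ₖ G' p.2) * (A ⊗ₖ B)).trace • (H p.1 ⊗ₖ H' p.2) = A ⊗ₖ B := by
  conv_rhs => rw [← h A, ← h' B, sum_kronecker_sum]
  simp only [← mul_kronecker_mul, trace_kronecker, Fintype.sum_prod_type, mul_smul,
    smul_kronecker, kronecker_smul]
  exact Finset.sum_congr rfl fun _ _ ↦ Finset.sum_congr rfl fun _ _ ↦ smul_comm _ _ _

theorem kronecker {G' H' : κ → Matrix m m R} (h : IsDualFrame G H) (h' : IsDualFrame G' H') :
    IsDualFrame (fun p : ι × κ ↦ G p.1 ⊗ₖ G' p.2) (fun p ↦ H p.1 ⊗ₖ H' p.2) := by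
  classical
  intro M
  induction M using Matrix.induction_on' with
  | h_zero => simp
  | h_add M N hM hN => simp only [mul_add, trace_add, add_smul, Finset.sum_add_distrib, hM, hN]
  | h_std_basis i j x =>
    rw [← mul_one x, ← single_kronecker_single]
    exact kronecker_apply_kronecker h h' _ _

open ComplexStarModule in
theorem of_isHermitian {G H : ι → Matrix n n ℂ}
    (h : ∀ M : Matrix n n ℂ, M.IsHermitian → M = ∑ t, (G t * M).trace • H t) :
    IsDualFrame G H := fun M ↦ by
  have hre := h _ (isHermitian_iff_isSelfAdjoint.mpr (ℜ M).2)
  have him := h _ (isHermitian_iff_isSelfAdjoint.mpr (ℑ M).2)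
  conv_rhs => rw [← realPart_add_I_smul_imaginaryPart M, hre, him]
  simp only [Finset.smul_sum, smul_smul, ← Finset.sum_add_distrib, ← add_smul]
  conv_lhs => rw [← realPart_add_I_smul_imaginaryPart M]
  simp only [mul_add, Matrix.mul_smul, trace_add, trace_smul, smul_eq_mul]

variable [DecidableEq n]

theorem dual_none_eq {K : Type*} [Field K] {G H : Option ι → Matrix n n K}
    (h : IsDualFrame G H) (hG : G none = 1) (htr : ∀ t, (G (some t)).trace = 0)
    (hn : (Fintype.card n : K) ≠ 0) : H none = (Fintype.card n : K)⁻¹ • 1 := by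
  have h1 := h 1
  simp only [Fintype.sum_option, hG, mul_one, trace_one, htr, zero_smul,
    Finset.sum_const_zero, add_zero] at h1
  rw [← h1, smul_smul, inv_mul_cancel₀ hn, one_smul]

theorem sub_sum_eq_apply_dual_none {G H : Option ι → Matrix n n R}
    (h : IsDualFrame G H) (hG : G none = 1)
    (hH : ∀ t, (H none * H (some t)).trace = 0) (φ : Matrix n n R →ₗ[R] R)
    {ρ : Matrix n n R} (hρ : ρ.trace = 1) :
    φ ρ - ∑ t, ∑ t', (G (some t) * ρ).trace * (H (some t) * H (some t')).trace * φ (G (some t'))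
      = φ (H none) := by
  have hρ_exp : ρ = H none + ∑ t, (G (some t) * ρ).trace • H (some t) := by
    conv_lhs => rw [← h ρ, Fintype.sum_option, hG, Matrix.one_mul, hρ, one_smul]
  have hH_exp (t : ι) : H (some t) = ∑ t', (H (some t) * H (some t')).trace • G (some t') := by
    conv_lhs => rw [← h.symm (H (some t)), Fintype.sum_option, hH, zero_smul, zero_add]
    exact Finset.sum_congr rfl fun _ _ ↦ by rw [trace_mul_comm]
  have hφρ : φ ρ = φ (H none) + ∑ t, ∑ t', (G (some t) * ρ).trace
      * (H (some t) * H (some t')).trace * φ (G (some t')) := by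
    conv_lhs => rw [hρ_exp]
    simp only [map_add, map_sum, map_smul, smul_eq_mul]
    congr 1
    refine Finset.sum_congr rfl fun t _ ↦ ?_
    conv_lhs => rw [hH_exp t]
    simp only [map_sum, map_smul, smul_eq_mul, Finset.mul_sum, mul_assoc]
  rw [hφρ, add_sub_cancel_right]

end IsDualFrame

theorem trace_mul_outer {d : ℕ} (M : Matrix (Fin d) (Fin d) ℂ) (v : Fin d → ℂ) :
    (M * outer v).trace = star v ⬝ᵥ M *ᵥ v := by
  rw [outer, mul_vecMulVec, trace_vecMulVec, dotProduct_comm]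

theorem trace_sum_smul_outer_mul {d : ℕ} {X : Type*} [Fintype X] (a : X → ℂ)
    (v : X → Fin d → ℂ) (N : Matrix (Fin d) (Fin d) ℂ) :
    ((∑ x, a x • outer (v x)) * N).trace = ∑ x, a x * (star (v x) ⬝ᵥ N *ᵥ v x) := by
  simp only [Matrix.sum_mul, trace_sum, smul_mul, trace_smul, smul_eq_mul, trace_mul_comm _ N,
    trace_mul_outer]

theorem sum_outer_eq_one_of_orthonormal {d : ℕ} (v : Fin d → Fin d → ℂ)
    (hv : ∀ x x', star (v x) ⬝ᵥ v x' = if x = x' then 1 else 0) :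
    ∑ x, outer (v x) = 1 := by
  have hrows : (of v).map star * (of v)ᵀ = 1 := by
    ext x x'
    simpa [mul_apply, one_apply, dotProduct] using hv x x'
  have hcols := congrFun₂ ((mul_eq_one_comm (M := Matrix (Fin d) (Fin d) ℂ)).mp hrows)
  ext i j
  simpa [Matrix.sum_apply, outer, vecMulVec_apply, mul_apply, mul_comm] using hcols i j

def chanLinearMap {d : ℕ} (C : Matrix (Fin d × Fin d) (Fin d × Fin d) ℂ) :
    Matrix (Fin d) (Fin d) ℂ →ₗ[ℂ] Matrix (Fin d) (Fin d) ℂ where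
  toFun := chan C
  map_add' A B := by
    ext
    simp [chan, ptrace1, add_kronecker, Matrix.mul_add, Finset.sum_add_distrib]
  map_smul' a A := by
    ext
    simp [chan, ptrace1, smul_kronecker, Finset.mul_sum]

@[simp]
theorem chanLinearMap_apply {d : ℕ} (C : Matrix (Fin d × Fin d) (Fin d × Fin d) ℂ)
    (A : Matrix (Fin d) (Fin d) ℂ) : chanLinearMap C A = chan C A := rfl

theorem trace_mul_chan {d : ℕ} (C : Matrix (Fin d × Fin d) (Fin d × Fin d) ℂ)
    (A B : Matrix (Fin d) (Fin d) ℂ) :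
    (B * chan C A).trace = ((Aᵀ ⊗ₖ B) * C).trace := by
  simp only [trace, diag, mul_apply, chan, ptrace1, ptranspose1, of_apply, kroneckerMap_apply,
    one_apply, Fintype.sum_prod_type, transpose_apply, Finset.mul_sum, mul_ite,
    mul_zero, mul_one, Finset.sum_ite_eq', Finset.mem_univ, if_true]
  conv_lhs => enter [2, i]; rw [Finset.sum_comm]
  conv_lhs => enter [2, i, 2, x]; rw [Finset.sum_comm]
  rw [Finset.sum_comm]
  refine Finset.sum_congr rfl fun _ _ ↦ Finset.sum_congr rfl fun _ _ ↦
    Finset.sum_congr rfl fun _ _ ↦ Finset.sum_congr rfl fun _ _ ↦ by ring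

section Statistics

variable {d : ℕ} {Y : Type*} [Fintype Y] (y₀ : Y) {w : Y → Fin d → Fin d → ℂ}
  (g : Y → Fin d → Fin (d - 1) → ℝ)

theorem sum_gfam_smul_outer
    (horth : ∀ y (x x' : Fin d), star (w y x) ⬝ᵥ w y x' = if x = x' then 1 else 0)
    (t : Option (Y × Fin (d - 1))) :
    ∑ x, (gfam g t x : ℂ) • outer (w (yOf y₀ t) x) = Gfam w g t := by
  rcases t with _ | ⟨y, z⟩
  · simpa [gfam, yOf, Gfam] using sum_outer_eq_one_of_orthonormal (w y₀) (horth y₀)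
  · rfl

theorem trace_Gfam_mul
    (horth : ∀ y (x x' : Fin d), star (w y x) ⬝ᵥ w y x' = if x = x' then 1 else 0)
    (t : Option (Y × Fin (d - 1))) (N : Matrix (Fin d) (Fin d) ℂ) :
    (Gfam w g t * N).trace
      = ∑ x, (gfam g t x : ℂ) * (star (w (yOf y₀ t) x) ⬝ᵥ N *ᵥ w (yOf y₀ t) x) := by
  rw [← sum_gfam_smul_outer y₀ g horth, trace_sum_smul_outer_mul]

theorem sum_mul_P1 (ρ : Matrix (Fin d) (Fin d) ℂ) (t : Y × Fin (d - 1)) :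
    ∑ x, (g t.1 x t.2 : ℂ) * P1 w ρ x t.1 = (Gfam w g (some t) * ρ).trace :=
  (trace_sum_smul_outer_mul _ _ ρ).symm

theorem sum_mul_P20
    (horth : ∀ y (x x' : Fin d), star (w y x) ⬝ᵥ w y x' = if x = x' then 1 else 0)
    (ρ : Matrix (Fin d) (Fin d) ℂ) (C : Matrix (Fin d × Fin d) (Fin d × Fin d) ℂ)
    (t : Option (Y × Fin (d - 1))) :
    ∑ x, (gfam g t x : ℂ) * P20 w ρ C x (yOf y₀ t) = (Gfam w g t * chan C ρ).trace :=
  (trace_Gfam_mul y₀ g horth t _).symm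

theorem sum_mul_P2
    (horth : ∀ y (x x' : Fin d), star (w y x) ⬝ᵥ w y x' = if x = x' then 1 else 0)
    (C : Matrix (Fin d × Fin d) (Fin d × Fin d) ℂ)
    (t1 : Y × Fin (d - 1)) (t2 : Option (Y × Fin (d - 1))) :
    ∑ x1, ∑ x2, (g t1.1 x1 t1.2 : ℂ) * (gfam g t2 x2 : ℂ) * P2 w C x2 (yOf y₀ t2) x1 t1.1
      = (Gfam w g t2 * chan C (Gfam w g (some t1))).trace := by
  rw [show Gfam w g (some t1) = ∑ x, (g t1.1 x t1.2 : ℂ) • outer (w t1.1 x) from rfl,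
    ← chanLinearMap_apply, map_sum]
  simp only [map_smul, chanLinearMap_apply, trace_sum, Matrix.mul_smul,
    trace_smul, smul_eq_mul, trace_Gfam_mul y₀ g horth, Finset.mul_sum, mul_assoc]
  rfl

end Statistics

theorem stmt16_general {d : ℕ} (hd : 2 ≤ d) {Y : Type*} [Fintype Y] [DecidableEq Y] (y₀ : Y)
    (w : Y → Fin d → Fin d → ℂ)
    (g : Y → Fin d → Fin (d - 1) → ℝ)
    (H : Option (Y × Fin (d - 1)) → Matrix (Fin d) (Fin d) ℂ)
    -- (A3): each {|x,y⟩ : x} is an orthonormal basis of ℂ^d, so each E_{x|y} is rank one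
    (horth : ∀ y (x x' : Fin d), star (w y x) ⬝ᵥ w y x' = if x = x' then 1 else 0)
    -- each G_{y,z} is traceless
    (htraceless : ∀ y z, (Gfam w g (some (y, z))).trace = 0)
    -- (A1): {I} ∪ {G_{y,z}} is a basis of Herm(d), with dual basis H (Hermitian),
    -- expressed via the trace-duality and expansion properties
    (hdual : ∀ t t', (Gfam w g t' * H t).trace = if t = t' then 1 else 0)
    (hcomplete : ∀ M : Matrix (Fin d) (Fin d) ℂ, M.IsHermitian →
      M = ∑ t : Option (Y × Fin (d - 1)), (Gfam w g t * M).trace • H t)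
    -- the memoryless sequential strategy (ρ1, C)
    (ρ1 : Matrix (Fin d) (Fin d) ℂ) (hρ1tr : ρ1.trace = 1)
    (C : Matrix (Fin d × Fin d) (Fin d × Fin d) ℂ) :
    ChatP y₀ g H (P1 w ρ1) (P2 w C) (P20 w ρ1 C) = C := by
  have hframe : IsDualFrame (Gfam w g) H := .of_isHermitian hcomplete
  have hH₀ : H none = (d : ℂ)⁻¹ • 1 := by
    simpa using hframe.dual_none_eq rfl (fun t ↦ htraceless t.1 t.2)
      (by simpa using (by omega : d ≠ 0))
  have hH₀_mul (t : Y × Fin (d - 1)) : (H none * H (some t)).trace = 0 := by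
    have htr := hdual (some t) none
    simp only [Gfam, Matrix.one_mul, reduceCtorEq, if_false] at htr
    simp [hH₀, htr]
  conv_rhs => rw [← hframe.transpose.kronecker hframe C, Fintype.sum_prod_type,
    Fintype.sum_option]
  simp only [ChatP, sum_mul_P1, sum_mul_P2 y₀ g horth, sum_mul_P20 y₀ g horth, trace_mul_chan]
  refine (add_comm _ _).trans (congrArg₂ (· + ·) (Finset.sum_congr rfl fun t _ ↦ ?_) rfl)
  let φ := traceLinearMap (Fin d) ℂ ℂ ∘ₗ LinearMap.mulLeft ℂ (Gfam w g t) ∘ₗ chanLinearMap C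
  have hcoeff := hframe.sub_sum_eq_apply_dual_none rfl hH₀_mul φ hρ1tr
  simp only [φ, LinearMap.comp_apply, chanLinearMap_apply, LinearMap.mulLeft_apply,
    traceLinearMap_apply, trace_mul_chan] at hcoeff
  rw [hcoeff, hH₀]
  simp [smul_kronecker, smul_smul, mul_comm, Gfam]

/-- under (A1) and (A3), for a memoryless sequential strategy (ρ1, C),
the reconstructed Choi matrix from the generated statistics recovers C exactly. -/
theorem stmt16 {d : ℕ} (hd : 2 ≤ d) {Y : Type*} [Fintype Y] [DecidableEq Y] (y₀ : Y)
    (w : Y → Fin d → Fin d → ℂ)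
    (g : Y → Fin d → Fin (d - 1) → ℝ)
    (H : Option (Y × Fin (d - 1)) → Matrix (Fin d) (Fin d) ℂ)
    -- (A3): each {|x,y⟩ : x} is an orthonormal basis of ℂ^d, so each E_{x|y} is rank one
    (horth : ∀ y (x x' : Fin d), star (w y x) ⬝ᵥ w y x' = if x = x' then 1 else 0)
    -- each G_{y,z} is traceless
    (htraceless : ∀ y z, (Gfam w g (some (y, z))).trace = 0)
    -- (A1): {I} ∪ {G_{y,z}} is a basis of Herm(d), with dual basis H (Hermitian),
    -- expressed via the trace-duality and expansion properties
    (hH : ∀ t, (H t).IsHermitian)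
    (hdual : ∀ t t', (Gfam w g t' * H t).trace = if t = t' then 1 else 0)
    (hcomplete : ∀ M : Matrix (Fin d) (Fin d) ℂ, M.IsHermitian →
      M = ∑ t : Option (Y × Fin (d - 1)), (Gfam w g t * M).trace • H t)
    -- the memoryless sequential strategy (ρ1, C)
    (ρ1 : Matrix (Fin d) (Fin d) ℂ) (hρ1 : ρ1.PosSemidef) (hρ1tr : ρ1.trace = 1)
    (C : Matrix (Fin d × Fin d) (Fin d × Fin d) ℂ) (hC : C.PosSemidef)
    (hCTP : ptrace2 C = 1) :
    ChatP y₀ g H (P1 w ρ1) (P2 w C) (P20 w ρ1 C) = C :=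
  stmt16_general hd y₀ w g H horth htraceless hdual hcomplete ρ1 hρ1tr C
end
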